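/- arXiv:math/0304435 — 6 statements merged into one kernel-verified Lean document; each statement's English description precedes it below -/
import Mathlib

section
/- Let X be a right Hilbert module over a C*-algebra A and τ a finite trace on A. For a positive adjointable operator T on X define Tr_τ(T) = sup_I Σ_{ξ∈I} τ(⟨ξ, Tξ⟩), where the supremum runs over finite subsets I of X with Σ_{ξ∈I} θ_{ξ,ξ} ≤ 1. Then for every ξ ∈ X one has Tr_τ(θ_{ξ,ξ}) = τ(⟨ξ,ξ⟩). -/
open scoped ENNReal ComplexOrder
open Filter Topology MeasureTheory

section Preamble

variable (A : Type*) [NonUnitalNormedRing A] [StarRing A] [CStarRing A]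
  [NormedSpace ℂ A] [IsScalarTower ℂ A A] [SMulCommClass ℂ A A] [StarModule ℂ A]
  [PartialOrder A] [StarOrderedRing A] [CompleteSpace A]
variable (X : Type*) [NormedAddCommGroup X] [NormedSpace ℂ X] [CompleteSpace X]

/-- A right Hilbert C*-module structure on `X` over `A`. -/
structure CStarModuleStr where
  smulR : X → A → X
  inner : X → X → A
  add_smulR : ∀ x y a, smulR (x + y) a = smulR x a + smulR y a
  smulR_add : ∀ x a b, smulR x (a + b) = smulR x a + smulR x b
  smulR_mul : ∀ x a b, smulR (smulR x a) b = smulR x (a * b)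
  smulC_smulR : ∀ (c : ℂ) x a, smulR (c • x) a = c • smulR x a
  inner_add_right : ∀ x y z, inner x (y + z) = inner x y + inner x z
  inner_smulR_right : ∀ x y a, inner x (smulR y a) = inner x y * a
  inner_smulC_right : ∀ (c : ℂ) x y, inner x (c • y) = c • inner x y
  star_inner : ∀ x y, star (inner x y) = inner y x
  inner_self_nonneg : ∀ x, 0 ≤ inner x x
  inner_self_eq_zero : ∀ x, inner x x = 0 → x = 0
  norm_inner_self : ∀ x, ‖x‖ ^ 2 = ‖inner x x‖

variable {A X}

/-- The `generalized rank-one operator` θ_{ξ,ζ} : η ↦ ξ⟨ζ,η⟩. -/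
def rankOne (M : CStarModuleStr A X) (ξ ζ : X) : X → X := fun η => M.smulR ξ (M.inner ζ η)

/-- The condition `Σ_{ξ∈I} θ_{ξ,ξ} ≤ 1`, expressed via inner products. -/
def Subunit (M : CStarModuleStr A X) (I : Finset X) : Prop :=
  ∀ η, ∑ ξ ∈ I, M.inner η ξ * M.inner ξ η ≤ M.inner η η

/-- The trace on (positive) operators on `X` induced by a functional `τ` on `A`:
`Tr_τ(T) = sup_I Σ_{ξ∈I} τ(⟨ξ, Tξ⟩)` over finite `I` with `Σ_{ξ∈I} θ_{ξ,ξ} ≤ 1`. -/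
noncomputable def trInduced (M : CStarModuleStr A X) (τ : A → ℂ) (T : X → X) : ℝ≥0∞ :=
  ⨆ (I : Finset X) (_ : Subunit M I), ∑ ξ ∈ I, ENNReal.ofReal (τ (M.inner ξ (T ξ))).re

/-- A finite trace on the C*-algebra `A`: a bounded positive tracial linear functional. -/
structure IsFiniteTrace (τ : A → ℂ) : Prop where
  map_add : ∀ a b, τ (a + b) = τ a + τ b
  map_smul : ∀ (c : ℂ) a, τ (c • a) = c * τ a
  nonneg : ∀ a, 0 ≤ a → 0 ≤ τ a
  tracial : ∀ a b, τ (a * b) = τ (b * a)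
  bounded : ∃ C : ℝ, ∀ a, ‖τ a‖ ≤ C * ‖a‖

/-- `T` is adjointable on the Hilbert module `X`. -/
def IsAdjointable (M : CStarModuleStr A X) (T : X → X) : Prop :=
  ∃ S : X → X, ∀ x y, M.inner (S x) y = M.inner x (T y)

/-- `T` is a positive adjointable operator on the Hilbert module `X`. -/
def IsPositiveOp (M : CStarModuleStr A X) (T : X → X) : Prop :=
  IsAdjointable M T ∧ ∀ x, 0 ≤ M.inner x (T x)

end Preamble


section AuxLemmas

variable {A : Type*} [NonUnitalNormedRing A] [StarRing A] [CStarRing A]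
  [NormedSpace ℂ A] [IsScalarTower ℂ A A] [SMulCommClass ℂ A A] [StarModule ℂ A]
  [PartialOrder A] [StarOrderedRing A] [CompleteSpace A]
  {X : Type*} [NormedAddCommGroup X] [NormedSpace ℂ X] [CompleteSpace X]

lemma CSM_inner_add_left (M : CStarModuleStr A X) (u v z : X) :
    M.inner (u + v) z = M.inner u z + M.inner v z := by
  rw [← M.star_inner, M.inner_add_right, star_add, M.star_inner, M.star_inner]

lemma CSM_inner_smulR_left (M : CStarModuleStr A X) (x y : X) (a : A) :
    M.inner (M.smulR x a) y = star a * M.inner x y := by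
  rw [← M.star_inner, M.inner_smulR_right, star_mul, M.star_inner]

lemma CSM_inner_smulC_left (M : CStarModuleStr A X) (c : ℂ) (x y : X) :
    M.inner (c • x) y = (starRingEnd ℂ c) • M.inner x y := by
  rw [← M.star_inner, M.inner_smulC_right, star_smul, M.star_inner]
  rfl

/-- Cauchy–Schwarz-type inequality: if `‖⟨y,y⟩‖ ≤ 1` then `⟨x,y⟩⟨y,x⟩ ≤ ⟨x,x⟩`. -/
lemma CSM_cauchy_schwarz (M : CStarModuleStr A X) (y : X) (hy : ‖M.inner y y‖ ≤ 1) (x : X) :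
    M.inner x y * M.inner y x ≤ M.inner x x := by
  letI : NonUnitalCStarAlgebra A := { }
  set c := M.inner y x with hc
  have hxy : M.inner x y = star c := (M.star_inner y x).symm
  have hyy : IsSelfAdjoint (M.inner y y) := M.star_inner y y
  set q : A := star c * c with hq
  set w : X := (-1 : ℂ) • M.smulR y c with hw
  have e1 : M.inner x w = -q := by
    rw [hw, M.inner_smulC_right, M.inner_smulR_right, hxy, hq]
    simp
  have e2 : M.inner w x = -q := by
    rw [← M.star_inner, e1, star_neg, hq, star_mul, star_star]
  have e3 : M.inner w w = star c * M.inner y y * c := by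
    have inner_yc : M.inner (M.smulR y c) (M.smulR y c) = star c * M.inner y y * c := by
      rw [M.inner_smulR_right, CSM_inner_smulR_left]
    rw [hw, M.inner_smulC_right, CSM_inner_smulC_left, inner_yc]
    simp
  have h0 : (0 : A) ≤ M.inner (x + w) (x + w) := M.inner_self_nonneg _
  have expand : M.inner (x + w) (x + w) = M.inner x x - q - q + star c * M.inner y y * c := by
    rw [M.inner_add_right, CSM_inner_add_left, CSM_inner_add_left, e1, e2, e3]
    abel
  have hd : star c * M.inner y y * c ≤ q := by
    refine (CStarAlgebra.star_left_conjugate_le_norm_smul hyy).trans ?_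
    calc ‖M.inner y y‖ • (star c * c) ≤ (1 : ℝ) • (star c * c) :=
          smul_le_smul_of_nonneg_right hy (star_mul_self_nonneg c)
      _ = q := by rw [one_smul, hq]
  have hfin : (0 : A) ≤ M.inner x x - q := by
    have h2 : (0 : A) ≤ (M.inner x x - q - q + star c * M.inner y y * c)
        + (q - star c * M.inner y y * c) := by
      rw [← expand] at *
      exact add_nonneg h0 (sub_nonneg.mpr hd)
    have h3 : (M.inner x x - q - q + star c * M.inner y y * c)
        + (q - star c * M.inner y y * c) = M.inner x x - q := by abel
    rwa [h3] at h2
  have := sub_nonneg.mp hfin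
  rwa [hq, ← hxy] at this

section TraceLemmas

variable {τ : A → ℂ} (hτ : IsFiniteTrace τ)
include hτ

lemma trace_zero : τ 0 = 0 := by
  have := hτ.map_smul 0 0
  simpa using this

lemma trace_neg (a : A) : τ (-a) = -τ a := by
  have := hτ.map_smul (-1) a
  simpa using this

lemma trace_sub (a b : A) : τ (a - b) = τ a - τ b := by
  rw [sub_eq_add_neg, hτ.map_add, trace_neg hτ, sub_eq_add_neg]

lemma trace_sum {ι : Type*} (s : Finset ι) (f : ι → A) :
    τ (∑ i ∈ s, f i) = ∑ i ∈ s, τ (f i) := by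
  classical
  induction s using Finset.induction with
  | empty => simpa using trace_zero hτ
  | insert _ _ h ih => rw [Finset.sum_insert h, Finset.sum_insert h, hτ.map_add, ih]

lemma trace_re_nonneg {a : A} (ha : 0 ≤ a) : 0 ≤ (τ a).re := by
  have := hτ.nonneg a ha
  rw [Complex.le_def] at this
  simpa using this.1

lemma trace_mono {a b : A} (hab : a ≤ b) : (τ a).re ≤ (τ b).re := by
  have h1 : 0 ≤ (τ (b - a)).re := trace_re_nonneg hτ (sub_nonneg.mpr hab)
  rw [trace_sub hτ, Complex.sub_re] at h1
  linarith

end TraceLemmas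

/-- The key functional-calculus construction: for `0 ≤ b` and `e > 0` there is a selfadjoint
`a` with `‖a b a‖ ≤ 1` and `‖b - a b² a‖ ≤ 2e`. -/
lemma cfc_approx (b : A) (hb : 0 ≤ b) (e : ℝ) (he : 0 < e) :
    ∃ a : A, IsSelfAdjoint a ∧ ‖a * b * a‖ ≤ 1 ∧ ‖b - a * b * b * a‖ ≤ 2 * e := by
  letI : NonUnitalCStarAlgebra A := { }
  have hq : ∀ x ∈ quasispectrum ℝ b, 0 ≤ x := quasispectrum_nonneg_of_nonneg b hb
  set g : ℝ → ℝ := fun t => Real.sqrt t / (e + t) with hgdef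
  have hepos : ∀ t ∈ quasispectrum ℝ b, 0 < e + t := fun t ht => by have := hq t ht; linarith
  have hgc : ContinuousOn g (quasispectrum ℝ b) :=
    ContinuousOn.div Real.continuous_sqrt.continuousOn (by fun_prop)
      (fun t ht => (hepos t ht).ne')
  have hg0 : g 0 = 0 := by simp [hgdef]
  have hidc : ContinuousOn (id : ℝ → ℝ) (quasispectrum ℝ b) := continuous_id.continuousOn
  set a : A := cfcₙ g b with ha
  have hasa : IsSelfAdjoint a := cfcₙ_predicate g b
  have h1c : ContinuousOn (fun t => g t * id t) (quasispectrum ℝ b) := hgc.mul hidc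
  have h10 : g 0 * id 0 = 0 := by simp [hg0]
  have h2c : ContinuousOn (fun t => g t * id t * id t) (quasispectrum ℝ b) := h1c.mul hidc
  have h20 : g 0 * id 0 * id 0 = 0 := by simp [hg0]
  have m1 : cfcₙ (fun t => g t * id t) b = a * b := by
    rw [cfcₙ_mul g id b hgc hg0 hidc (by simp), cfcₙ_id ℝ b]
  have m2 : cfcₙ (fun t => g t * id t * g t) b = a * b * a := by
    rw [cfcₙ_mul _ g b h1c h10 hgc hg0, m1]
  have m3 : cfcₙ (fun t => g t * id t * id t * g t) b = a * b * b * a := by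
    rw [cfcₙ_mul _ g b h2c h20 hgc hg0, cfcₙ_mul _ id b h1c h10 hidc (by simp), m1, cfcₙ_id ℝ b]
  have m4 : cfcₙ (fun t => id t - g t * id t * id t * g t) b = b - a * b * b * a := by
    rw [cfcₙ_sub id (fun t => g t * id t * id t * g t) b hidc (by simp) (h2c.mul hgc) (by simp [hg0]), m3, cfcₙ_id ℝ b]
  have sqg : ∀ t, 0 ≤ t → g t * id t * g t = t * t / ((e + t) * (e + t)) := by
    intro t ht0
    simp only [hgdef, id]
    rw [div_mul_eq_mul_div, div_mul_div_comm]
    congr 1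
    rw [show Real.sqrt t * t * Real.sqrt t = (Real.sqrt t * Real.sqrt t) * t by ring,
      Real.mul_self_sqrt ht0]
  have sqg2 : ∀ t, 0 ≤ t → g t * id t * id t * g t = t * t * t / ((e + t) * (e + t)) := by
    intro t ht0
    simp only [hgdef, id]
    rw [div_mul_eq_mul_div, div_mul_eq_mul_div, div_mul_div_comm]
    congr 1
    rw [show Real.sqrt t * t * t * Real.sqrt t = (Real.sqrt t * Real.sqrt t) * (t * t) by ring,
      Real.mul_self_sqrt ht0]
    ring
  refine ⟨a, hasa, ?_, ?_⟩
  · rw [← m2]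
    apply norm_cfcₙ_le
    intro t ht
    have ht0 := hq t ht
    have hp := hepos t ht
    rw [sqg t ht0, Real.norm_eq_abs, abs_of_nonneg (by positivity), div_le_one (by positivity)]
    nlinarith
  · rw [← m4]
    apply norm_cfcₙ_le
    intro t ht
    have ht0 := hq t ht
    have hp := hepos t ht
    rw [sqg2 t ht0]
    have h2 : id t - t * t * t / ((e + t) * (e + t))
        = t * e * (e + 2 * t) / ((e + t) * (e + t)) := by
      simp only [id]; field_simp; ring
    rw [h2, Real.norm_eq_abs, abs_of_nonneg (by positivity), div_le_iff₀ (by positivity)]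
    nlinarith [mul_nonneg (mul_nonneg ht0 he.le) he.le, mul_nonneg (mul_nonneg ht0 ht0) he.le,
      mul_pos he he]

end AuxLemmas

/-- For a finite trace `τ` on `A` and `ξ ∈ X`,
`Tr_τ(θ_{ξ,ξ}) = τ(⟨ξ,ξ⟩)`. -/
theorem trInduced_rankOne_self
    {A : Type*} [NonUnitalNormedRing A] [StarRing A] [CStarRing A]
    [NormedSpace ℂ A] [IsScalarTower ℂ A A] [SMulCommClass ℂ A A] [StarModule ℂ A]
    [PartialOrder A] [StarOrderedRing A] [CompleteSpace A]
    {X : Type*} [NormedAddCommGroup X] [NormedSpace ℂ X] [CompleteSpace X]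
    (M : CStarModuleStr A X) (τ : A → ℂ) (hτ : IsFiniteTrace τ) (ξ : X) :
    trInduced M τ (rankOne M ξ ξ) = ENNReal.ofReal (τ (M.inner ξ ξ)).re := by
    classical
  letI : NonUnitalCStarAlgebra A := { }
  obtain ⟨C, hC⟩ := hτ.bounded
  set b := M.inner ξ ξ with hbdef
  have hb : 0 ≤ b := M.inner_self_nonneg ξ
  have hterm : ∀ η : X, M.inner η (rankOne M ξ ξ η) = M.inner η ξ * M.inner ξ η := by
    intro η
    show M.inner η (M.smulR ξ (M.inner ξ η)) = _
    rw [M.inner_smulR_right]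
  have hterm_nonneg : ∀ η : X, 0 ≤ M.inner η (rankOne M ξ ξ η) := by
    intro η
    rw [hterm η, ← M.star_inner ξ η]
    exact star_mul_self_nonneg _
  apply le_antisymm
  · -- upper bound
    unfold trInduced
    refine iSup₂_le fun I hI => ?_
    have hre : ∑ η ∈ I, (τ (M.inner η (rankOne M ξ ξ η))).re ≤ (τ b).re := by
      have h1 : ∑ η ∈ I, (τ (M.inner η (rankOne M ξ ξ η))).re
          = (τ (∑ η ∈ I, M.inner ξ η * M.inner η ξ)).re := by
        rw [trace_sum hτ, Complex.re_sum]
        refine Finset.sum_congr rfl fun η _ => ?_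
        rw [hterm η, hτ.tracial]
      rw [h1]
      exact trace_mono hτ (hI ξ)
    calc ∑ η ∈ I, ENNReal.ofReal (τ (M.inner η (rankOne M ξ ξ η))).re
        = ENNReal.ofReal (∑ η ∈ I, (τ (M.inner η (rankOne M ξ ξ η))).re) :=
          (ENNReal.ofReal_sum_of_nonneg fun η _ =>
            trace_re_nonneg hτ (hterm_nonneg η)).symm
      _ ≤ ENNReal.ofReal (τ b).re := ENNReal.ofReal_le_ofReal hre
  · -- lower bound
    refine ENNReal.le_of_forall_pos_le_add fun ε hε _ => ?_
    set C' : ℝ := max C 0 with hC'def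
    have hC'0 : 0 ≤ C' := le_max_right C 0
    have hC' : ∀ a, ‖τ a‖ ≤ C' * ‖a‖ := fun a =>
      (hC a).trans (mul_le_mul_of_nonneg_right (le_max_left C 0) (norm_nonneg a))
    set e : ℝ := (ε : ℝ) / (2 * C' + 1) with hedef
    have hεpos : (0 : ℝ) < ε := hε
    have hepos : 0 < e := by positivity
    obtain ⟨a, hasa, hnorm, hdiff⟩ := cfc_approx b hb e hepos
    set η := M.smulR ξ a with hηdef
    have i1 : M.inner η ξ = a * b := by
      rw [hηdef, CSM_inner_smulR_left, hasa.star_eq]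
    have i2 : M.inner ξ η = b * a := M.inner_smulR_right ξ ξ a
    have i3 : M.inner η η = a * b * a := by
      rw [hηdef, M.inner_smulR_right, ← hηdef, i1]
    have i4 : M.inner η (rankOne M ξ ξ η) = a * b * b * a := by
      rw [hterm η, i1, i2, mul_assoc, mul_assoc, mul_assoc]
    have hsub : Subunit M {η} := by
      intro x
      rw [Finset.sum_singleton]
      exact CSM_cauchy_schwarz M η (by rw [i3]; exact hnorm) x
    have hval : ENNReal.ofReal (τ (a * b * b * a)).re ≤ trInduced M τ (rankOne M ξ ξ) := by
      have : ∑ ζ ∈ ({η} : Finset X), ENNReal.ofReal (τ (M.inner ζ (rankOne M ξ ξ ζ))).re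
          ≤ trInduced M τ (rankOne M ξ ξ) := by
        unfold trInduced
        exact le_iSup₂_of_le ({η} : Finset X) hsub le_rfl
      rwa [Finset.sum_singleton, i4] at this
    have h5 : (τ b).re ≤ (τ (a * b * b * a)).re + 2 * C' * e := by
      have hd : (τ b).re - (τ (a * b * b * a)).re = (τ (b - a * b * b * a)).re := by
        rw [trace_sub hτ, Complex.sub_re]
      have hn : (τ (b - a * b * b * a)).re ≤ C' * (2 * e) := by
        calc (τ (b - a * b * b * a)).re ≤ ‖τ (b - a * b * b * a)‖ := by
              exact Complex.re_le_norm _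
          _ ≤ C' * ‖b - a * b * b * a‖ := hC' _
          _ ≤ C' * (2 * e) := mul_le_mul_of_nonneg_left hdiff hC'0
      linarith
    have h6 : 2 * C' * e ≤ (ε : ℝ) := by
      rw [hedef, mul_div_assoc']
      rw [div_le_iff₀ (by positivity)]
      nlinarith
    calc ENNReal.ofReal (τ b).re
        ≤ ENNReal.ofReal ((τ (a * b * b * a)).re + (ε : ℝ)) :=
          ENNReal.ofReal_le_ofReal (by linarith)
      _ ≤ ENNReal.ofReal (τ (a * b * b * a)).re + ENNReal.ofReal (ε : ℝ) :=
          ENNReal.ofReal_add_le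
      _ = ENNReal.ofReal (τ (a * b * b * a)).re + (ε : ℝ≥0∞) := by
          rw [ENNReal.ofReal_coe_nnreal]
      _ ≤ trInduced M τ (rankOne M ξ ξ) + (ε : ℝ≥0∞) := add_le_add_left hval _
end

section
/- Let X be a right Hilbert module over a C*-algebra A, τ a finite trace on A, and Tr_τ the induced trace on positive adjointable operators defined by Tr_τ(T) = sup_I Σ_{ξ∈I} τ(⟨ξ, Tξ⟩) over finite sets I with Σ_{ξ∈I} θ_{ξ,ξ} ≤ 1. If (T_k) is a net of positive adjointable operators and T a positive adjointable operator such that liminf_k τ(⟨ξ, T_k ξ⟩) ≥ τ(⟨ξ, Tξ⟩) for every ξ ∈ X, then liminf_k Tr_τ(T_k) ≥ Tr_τ(T). -/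
open scoped ENNReal ComplexOrder
open Filter Topology MeasureTheory

lemma ennreal_le_liminf_add {ι : Type*} {l : Filter ι} (u v : ι → ℝ≥0∞) :
    Filter.liminf u l + Filter.liminf v l ≤ Filter.liminf (fun k => u k + v k) l := by
  rw [Filter.liminf_eq, Filter.liminf_eq, sSup_eq_iSup, sSup_eq_iSup]
  refine ENNReal.biSup_add_biSup_le (f := fun a => a) (g := fun a => a)
    ⟨0, by simp⟩ ⟨0, by simp⟩ fun a ha b hb => ?_
  rw [Filter.liminf_eq]
  refine le_sSup ?_
  filter_upwards [ha, hb] with k h1 h2 using add_le_add h1 h2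

/-- Sum of liminfs is at most the liminf of the sum, in `ℝ≥0∞`. -/
lemma sum_liminf_le_liminf_sum {ι κ : Type*} (l : Filter ι) [l.NeBot]
    (s : Finset κ) (f : κ → ι → ℝ≥0∞) :
    ∑ j ∈ s, Filter.liminf (f j) l ≤ Filter.liminf (fun k => ∑ j ∈ s, f j k) l := by
  classical
  induction s using Finset.induction_on with
  | empty => simp
  | @insert a s' hj ih =>
    simp only [Finset.sum_insert hj]
    exact le_trans (add_le_add le_rfl ih) (ennreal_le_liminf_add _ _)

/-- If (T_k) is a net of positive adjointable operators and T a positive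
adjointable operator with liminf_k τ(⟨ξ, T_k ξ⟩) ≥ τ(⟨ξ, Tξ⟩) for every ξ, then
liminf_k Tr_τ(T_k) ≥ Tr_τ(T). -/
theorem trInduced_liminf_ge
    {A : Type*} [NonUnitalNormedRing A] [StarRing A] [CStarRing A]
    [NormedSpace ℂ A] [IsScalarTower ℂ A A] [SMulCommClass ℂ A A] [StarModule ℂ A]
    [PartialOrder A] [StarOrderedRing A] [CompleteSpace A]
    {X : Type*} [NormedAddCommGroup X] [NormedSpace ℂ X] [CompleteSpace X]
    (M : CStarModuleStr A X) (τ : A → ℂ) (hτ : IsFiniteTrace τ)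
    {ι : Type*} (l : Filter ι) [l.NeBot]
    (T : ι → X → X) (hT : ∀ k, IsPositiveOp M (T k))
    (T₀ : X → X) (hT₀ : IsPositiveOp M T₀)
    (h : ∀ ξ : X, ENNReal.ofReal (τ (M.inner ξ (T₀ ξ))).re ≤
      Filter.liminf (fun k => ENNReal.ofReal (τ (M.inner ξ (T k ξ))).re) l) :
    trInduced M τ T₀ ≤ Filter.liminf (fun k => trInduced M τ (T k)) l := by
  refine iSup₂_le fun I hI => ?_
  calc ∑ ξ ∈ I, ENNReal.ofReal (τ (M.inner ξ (T₀ ξ))).re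
      ≤ ∑ ξ ∈ I, Filter.liminf (fun k => ENNReal.ofReal (τ (M.inner ξ (T k ξ))).re) l :=
        Finset.sum_le_sum fun ξ _ => h ξ
    _ ≤ Filter.liminf (fun k => ∑ ξ ∈ I, ENNReal.ofReal (τ (M.inner ξ (T k ξ))).re) l :=
        sum_liminf_le_liminf_sum l I _
    _ ≤ Filter.liminf (fun k => trInduced M τ (T k)) l := by
        refine Filter.liminf_le_liminf (Filter.Eventually.of_forall fun k => ?_)
        exact le_iSup₂_of_le I hI le_rfl
end

section
/- Let X be a right Hilbert module over a C*-algebra A and τ a finite trace on A. The induced trace Tr_τ on the adjointable operators B(X) satisfies the unitary invariance property Tr_τ(uTu*) = Tr_τ(T) for every unitary u ∈ B(X) and every positive T ∈ B(X). -/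
open scoped ENNReal ComplexOrder
open Filter Topology MeasureTheory

lemma trInduced_le_conj
    {A : Type*} [NonUnitalNormedRing A] [StarRing A] [CStarRing A]
    [NormedSpace ℂ A] [IsScalarTower ℂ A A] [SMulCommClass ℂ A A] [StarModule ℂ A]
    [PartialOrder A] [StarOrderedRing A] [CompleteSpace A]
    {X : Type*} [NormedAddCommGroup X] [NormedSpace ℂ X] [CompleteSpace X]
    (M : CStarModuleStr A X) (τ : A → ℂ)
    (u ustar : X → X)
    (hadj : ∀ x y, M.inner (ustar x) y = M.inner x (u y))
    (h₁ : ∀ x, u (ustar x) = x) (h₂ : ∀ x, ustar (u x) = x)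
    (T : X → X) :
    trInduced M τ T ≤ trInduced M τ (fun x => u (T (ustar x))) := by
  classical
  have huinj : Function.Injective u := Function.LeftInverse.injective h₂
  have hinner_u : ∀ x y, M.inner (u x) (u y) = M.inner x y := fun x y => by
    rw [← hadj, h₂]
  refine iSup₂_le fun I hI => ?_
  have hsub : Subunit M (I.image u) := by
    intro η
    rw [Finset.sum_image (fun a _ b _ h => huinj h)]
    have e1 : ∀ ξ, M.inner η (u ξ) = M.inner (ustar η) ξ := fun ξ => (hadj η ξ).symm
    have e2 : ∀ ξ, M.inner (u ξ) η = M.inner ξ (ustar η) := fun ξ => by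
      rw [← M.star_inner, e1, M.star_inner]
    calc ∑ ξ ∈ I, M.inner η (u ξ) * M.inner (u ξ) η
        = ∑ ξ ∈ I, M.inner (ustar η) ξ * M.inner ξ (ustar η) := by
          refine Finset.sum_congr rfl fun ξ _ => by rw [e1, e2]
      _ ≤ M.inner (ustar η) (ustar η) := hI (ustar η)
      _ = M.inner η η := by rw [hadj, h₁]
  refine le_trans (le_of_eq ?_) (le_iSup₂ (f := fun (I : Finset X) (_ : Subunit M I) =>
    ∑ ξ ∈ I, ENNReal.ofReal (τ (M.inner ξ (u (T (ustar ξ))))).re) (I.image u) hsub)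
  rw [Finset.sum_image (fun a _ b _ h => huinj h)]
  refine Finset.sum_congr rfl fun ξ _ => by rw [h₂, hinner_u]

/-- The induced trace is unitarily invariant: Tr_τ(uTu*) = Tr_τ(T)
for every unitary u ∈ B(X) and positive T ∈ B(X). -/
theorem trInduced_unitary_conj
    {A : Type*} [NonUnitalNormedRing A] [StarRing A] [CStarRing A]
    [NormedSpace ℂ A] [IsScalarTower ℂ A A] [SMulCommClass ℂ A A] [StarModule ℂ A]
    [PartialOrder A] [StarOrderedRing A] [CompleteSpace A]
    {X : Type*} [NormedAddCommGroup X] [NormedSpace ℂ X] [CompleteSpace X]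
    (M : CStarModuleStr A X) (τ : A → ℂ) (hτ : IsFiniteTrace τ)
    (u ustar : X → X)
    (hadj : ∀ x y, M.inner (ustar x) y = M.inner x (u y))
    (h₁ : ∀ x, u (ustar x) = x) (h₂ : ∀ x, ustar (u x) = x)
    (T : X → X) (hT : IsPositiveOp M T) :
    trInduced M τ (fun x => u (T (ustar x))) = trInduced M τ T := by
  have hadj' : ∀ x y, M.inner (u x) y = M.inner x (ustar y) := fun x y => by
    rw [← M.star_inner, ← hadj, M.star_inner]
  refine le_antisymm ?_ (trInduced_le_conj M τ u ustar hadj h₁ h₂ T)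
  have := trInduced_le_conj M τ ustar u hadj' h₂ h₁ (fun x => u (T (ustar x)))
  simpa [h₂] using this
end

section
/- Let X and Y be right Hilbert modules over a C*-algebra A, where Y carries a commuting left A-action making it a bimodule. For finite subsets I ⊂ X and J ⊂ Y, if Σ_{ξ∈I} θ_{ξ,ξ} ≤ 1 in B(X) and Σ_{ζ∈J} θ_{ζ,ζ} ≤ 1 in B(Y), then Σ_{ξ∈I, ζ∈J} θ_{ξ⊗ζ, ξ⊗ζ} ≤ 1 in B(X ⊗_A Y). -/
open scoped ENNReal ComplexOrder
open Filter Topology MeasureTheory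

section Bimod

variable (A : Type*) [NonUnitalNormedRing A] [StarRing A] [CStarRing A]
  [NormedSpace ℂ A] [IsScalarTower ℂ A A] [SMulCommClass ℂ A A] [StarModule ℂ A]
  [PartialOrder A] [StarOrderedRing A] [CompleteSpace A]
variable (X : Type*) [NormedAddCommGroup X] [NormedSpace ℂ X] [CompleteSpace X]

/-- A right Hilbert `A`-bimodule: a right Hilbert module together with a nondegenerate
adjointable left action of `A`. -/
structure CStarBimoduleStr extends CStarModuleStr A X where
  smulL : A → X → X
  smulL_add : ∀ a x y, smulL a (x + y) = smulL a x + smulL a y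
  add_smulL : ∀ a b x, smulL (a + b) x = smulL a x + smulL b x
  mul_smulL : ∀ a b x, smulL (a * b) x = smulL a (smulL b x)
  smulL_smulC : ∀ a (c : ℂ) x, smulL a (c • x) = c • smulL a x
  smulL_smulR : ∀ a x b, smulL a (smulR x b) = smulR (smulL a x) b
  inner_smulL : ∀ a x y, inner (smulL a x) y = inner x (smulL (star a) y)
  smulL_bound : ∀ a x, ‖smulL a x‖ ≤ ‖a‖ * ‖x‖
  nondegenerate : Dense
    ((Submodule.span ℂ {x : X | ∃ a y, x = smulL a y} : Submodule ℂ X) : Set X)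

end Bimod

section Tensor

variable (A : Type*) [NonUnitalNormedRing A] [StarRing A] [CStarRing A]
  [NormedSpace ℂ A] [IsScalarTower ℂ A A] [SMulCommClass ℂ A A] [StarModule ℂ A]
  [PartialOrder A] [StarOrderedRing A] [CompleteSpace A]
variable (X : Type*) [NormedAddCommGroup X] [NormedSpace ℂ X] [CompleteSpace X]
variable (Y : Type*) [NormedAddCommGroup Y] [NormedSpace ℂ Y] [CompleteSpace Y]
variable (Z : Type*) [NormedAddCommGroup Z] [NormedSpace ℂ Z] [CompleteSpace Z]

/-- A realization of the interior tensor product `X ⊗_A Y` of a right Hilbert module `X`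
with a right Hilbert bimodule `Y`, as a right Hilbert module `Z` together with a balanced
bilinear map whose elementary tensors span a dense subspace and whose inner products obey
`⟨x⊗y, x'⊗y'⟩ = ⟨y, ⟨x,x'⟩·y'⟩`. -/
structure InteriorTensorStr (M : CStarModuleStr A X) (N : CStarBimoduleStr A Y)
    (P : CStarModuleStr A Z) where
  tmul : X → Y → Z
  tmul_add_left : ∀ x x' y, tmul (x + x') y = tmul x y + tmul x' y
  tmul_add_right : ∀ x y y', tmul x (y + y') = tmul x y + tmul x y'
  tmul_smulC : ∀ (c : ℂ) x y, tmul (c • x) y = c • tmul x y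
  tmul_balanced : ∀ x a y, tmul (M.smulR x a) y = tmul x (N.smulL a y)
  smulR_tmul : ∀ x y a, P.smulR (tmul x y) a = tmul x (N.smulR y a)
  inner_tmul : ∀ x x' y y',
    P.inner (tmul x y) (tmul x' y') = N.inner y (N.smulL (M.inner x x') y')
  dense : Dense ((Submodule.span ℂ {z : Z | ∃ x y, z = tmul x y} : Submodule ℂ Z) : Set Z)

end Tensor

set_option linter.unusedSectionVars false

section AuxLemmas

variable {A : Type*} [NonUnitalNormedRing A] [StarRing A] [CStarRing A]
  [NormedSpace ℂ A] [IsScalarTower ℂ A A] [SMulCommClass ℂ A A] [StarModule ℂ A]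
  [PartialOrder A] [StarOrderedRing A] [CompleteSpace A]

/-- Bundle the hypotheses into mathlib's `NonUnitalCStarAlgebra` class. -/
local instance instNUCSA : NonUnitalCStarAlgebra A :=
  { ‹NonUnitalNormedRing A›, ‹StarRing A›, ‹CStarRing A›, ‹NormedSpace ℂ A› with
    complete := ‹CompleteSpace A›.complete
    smul_assoc := IsScalarTower.smul_assoc
    smul_comm := SMulCommClass.smul_comm
    star_smul := star_smul }

variable {X : Type*} [NormedAddCommGroup X] [NormedSpace ℂ X] [CompleteSpace X]

namespace CStarModuleStr

variable (M : CStarModuleStr A X)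

lemma inner_zero_right (x : X) : M.inner x 0 = 0 := by
  have := M.inner_add_right x 0 0
  simpa using this.symm

lemma inner_zero_left (x : X) : M.inner 0 x = 0 := by
  rw [← M.star_inner, inner_zero_right, star_zero]

lemma inner_add_left (x y z : X) : M.inner (x + y) z = M.inner x z + M.inner y z := by
  rw [← M.star_inner, M.inner_add_right, star_add, M.star_inner, M.star_inner]

lemma inner_sub_right (x y z : X) : M.inner x (y - z) = M.inner x y - M.inner x z := by
  have := M.inner_add_right x (y - z) z
  simp only [sub_add_cancel] at this
  rw [this]; abel

lemma inner_sub_left (x y z : X) : M.inner (x - y) z = M.inner x z - M.inner y z := by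
  rw [← M.star_inner, inner_sub_right, star_sub, M.star_inner, M.star_inner]

lemma inner_smulR_left (x y : X) (a : A) :
    M.inner (M.smulR x a) y = star a * M.inner x y := by
  rw [← M.star_inner, M.inner_smulR_right, star_mul, M.star_inner]

lemma inner_smulC_left (c : ℂ) (x y : X) :
    M.inner (c • x) y = (starRingEnd ℂ c) • M.inner x y := by
  rw [← M.star_inner, M.inner_smulC_right, star_smul, M.star_inner, starRingEnd_apply]

lemma ext_left {u v : X} (h : ∀ w, M.inner w u = M.inner w v) : u = v := by
  have h2 : M.inner (u - v) (u - v) = 0 := by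
    rw [inner_sub_right, h (u - v), sub_self]
  have := M.inner_self_eq_zero _ h2
  rwa [sub_eq_zero] at this

lemma smulR_smulC (x : X) (c : ℂ) (a : A) :
    M.smulR x (c • a) = c • M.smulR x a := by
  apply M.ext_left
  intro w
  rw [M.inner_smulR_right, M.inner_smulC_right, M.inner_smulR_right, mul_smul_comm]

lemma smulR_zero (x : X) : M.smulR x 0 = 0 := by
  apply M.ext_left
  intro w
  rw [M.inner_smulR_right, mul_zero, inner_zero_right]

lemma zero_smulR (a : A) : M.smulR 0 a = 0 := by
  have := M.add_smulR 0 0 a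
  simpa using this.symm

lemma isSelfAdjoint_inner_self (x : X) : IsSelfAdjoint (M.inner x x) :=
  M.star_inner x x

lemma inner_sum_right {ι : Type*} (s : Finset ι) (x : X) (f : ι → X) :
    M.inner x (∑ i ∈ s, f i) = ∑ i ∈ s, M.inner x (f i) := by
  classical
  induction s using Finset.cons_induction with
  | empty => simp [M.inner_zero_right]
  | cons i s hi ih => rw [Finset.sum_cons, M.inner_add_right, ih, Finset.sum_cons]

lemma inner_sum_left {ι : Type*} (s : Finset ι) (x : X) (f : ι → X) :
    M.inner (∑ i ∈ s, f i) x = ∑ i ∈ s, M.inner (f i) x := by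
  rw [← M.star_inner, inner_sum_right]
  simp only [← M.star_inner x]
  rw [← star_sum]

lemma sum_smulR {ι : Type*} (s : Finset ι) (f : ι → X) (a : A) :
    M.smulR (∑ i ∈ s, f i) a = ∑ i ∈ s, M.smulR (f i) a := by
  classical
  induction s using Finset.cons_induction with
  | empty => simp [M.zero_smulR]
  | cons i s hi ih => rw [Finset.sum_cons, M.add_smulR, ih, Finset.sum_cons]

/-- Cauchy–Schwarz for a positive semidefinite `A`-sesquilinear form on `X`. -/
theorem semiCS (B : X → X → A)
    (hpos : ∀ w, 0 ≤ B w w)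
    (haddr : ∀ x y z, B x (y + z) = B x y + B x z)
    (hsmulr : ∀ x y a, B x (M.smulR y a) = B x y * a)
    (hsmulc : ∀ (c : ℂ) x y, B x (c • y) = c • B x y)
    (hstar : ∀ x y, star (B x y) = B y x) (x y : X) :
    star (B x y) * B x y ≤ ‖B x x‖ • B y y := by
  have hsubr : ∀ x y z, B x (y - z) = B x y - B x z := by
    intro x y z
    have := haddr x (y - z) z
    simp only [sub_add_cancel] at this
    rw [this]; abel
  have hsubl : ∀ x y z, B (x - y) z = B x z - B y z := by
    intro x y z
    rw [← hstar, hsubr, star_sub, hstar, hstar]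
  have hsmulrl : ∀ x y a, B (M.smulR x a) y = star a * B x y := by
    intro x y a
    rw [← hstar, hsmulr, star_mul, hstar]
  set b := B x y with hb
  set n := ‖B x x‖ with hn
  have hBxxsa : IsSelfAdjoint (B x x) := hstar x x
  have hconj : star b * B x x * b ≤ n • (star b * b) :=
    CStarAlgebra.star_left_conjugate_le_norm_smul hBxxsa
  have key : ∀ t : ℝ, 0 < t →
      (2 * t) • (star b * b) ≤ (t ^ 2 * n) • (star b * b) + B y y := by
    intro t ht
    set w : X := M.smulR x ((t : ℂ) • b) - y with hw
    have h0 : 0 ≤ B w w := hpos w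
    have e1 : B (M.smulR x ((t : ℂ) • b)) (M.smulR x ((t : ℂ) • b))
        = (t ^ 2 : ℝ) • (star b * B x x * b) := by
      rw [hsmulr, hsmulrl, star_smul]
      have hst : star ((t : ℂ)) = (t : ℂ) := by
        simp [Complex.star_def, Complex.conj_ofReal]
      simp only [hst, smul_mul_assoc, mul_smul_comm, smul_smul]
      rw [mul_assoc (star b) (B x x) b, ← Complex.ofReal_mul, Complex.coe_smul, pow_two]
    have e2 : B (M.smulR x ((t : ℂ) • b)) y = t • (star b * b) := by
      rw [hsmulrl, star_smul]
      have : star ((t : ℂ)) = (t : ℂ) := by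
        simp [Complex.star_def, Complex.conj_ofReal]
      rw [this, smul_mul_assoc, Complex.coe_smul, ← hb]
    have e3 : B y (M.smulR x ((t : ℂ) • b)) = t • (star b * b) := by
      rw [hsmulr, ← hstar x y, ← hb, mul_smul_comm, Complex.coe_smul]
    have expand : B w w = (t ^ 2 : ℝ) • (star b * B x x * b)
        - t • (star b * b) - t • (star b * b) + B y y := by
      rw [hw, hsubl, hsubr, hsubr, e1, e2, e3]
      have e4 : B y y = B y y := rfl
      abel
    have h1 : (2 * t) • (star b * b) ≤ (t ^ 2 : ℝ) • (star b * B x x * b) + B y y := by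
      have : 0 ≤ ((t ^ 2 : ℝ) • (star b * B x x * b) + B y y) - (2 * t) • (star b * b) := by
        rw [expand] at h0
        have : (t ^ 2 : ℝ) • (star b * B x x * b) - t • (star b * b) - t • (star b * b) + B y y
            = ((t ^ 2 : ℝ) • (star b * B x x * b) + B y y) - (2 * t) • (star b * b) := by
          rw [two_mul, add_smul]; abel
        rwa [this] at h0
      exact sub_nonneg.mp this
    refine h1.trans ?_
    have : (t ^ 2 : ℝ) • (star b * B x x * b) ≤ (t ^ 2 : ℝ) • (n • (star b * b)) :=
      smul_le_smul_of_nonneg_left hconj (sq_nonneg t)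
    rw [smul_smul] at this
    exact add_le_add_left this _
  rcases eq_or_lt_of_le (norm_nonneg (B x x)) with hn0 | hnpos
  · -- n = 0
    have hBxx0 : B x x = 0 := by
      rw [← norm_eq_zero]; exact hn0.symm
    have hn' : n = 0 := by rw [hn, hBxx0, norm_zero]
    have key' : ∀ t : ℝ, 0 < t → star b * b ≤ (2 * t)⁻¹ • B y y := by
      intro t ht
      have h2 := key t ht
      rw [hn', mul_zero, zero_smul, zero_add] at h2
      have h2t : (0:ℝ) < 2 * t := by linarith
      calc star b * b = (2 * t)⁻¹ • ((2 * t) • (star b * b)) := by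
            rw [smul_smul, inv_mul_cancel₀ h2t.ne', one_smul]
        _ ≤ (2 * t)⁻¹ • B y y :=
            smul_le_smul_of_nonneg_left h2 (by positivity)
    have hle : ∀ j : ℕ, star b * b ≤ (2 * ((j:ℝ) + 1))⁻¹ • B y y := fun j =>
      key' _ (by positivity)
    have htend : Filter.Tendsto (fun j : ℕ => (2 * ((j:ℝ) + 1))⁻¹ • B y y)
        Filter.atTop (nhds ((0:ℝ) • B y y)) := by
      refine Filter.Tendsto.smul_const ?_ _
      have h1 : Filter.Tendsto (fun j : ℕ => (2 * ((j:ℝ) + 1))) Filter.atTop Filter.atTop := by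
        apply Filter.Tendsto.const_mul_atTop (by norm_num : (0:ℝ) < 2)
        exact Filter.tendsto_atTop_add_const_right _ _ tendsto_natCast_atTop_atTop
      exact h1.inv_tendsto_atTop
    rw [zero_smul] at htend
    have : star b * b ≤ 0 :=
      le_of_tendsto_of_tendsto tendsto_const_nhds htend (Filter.Eventually.of_forall hle)
    rw [hn', zero_smul]
    exact this
  · -- n > 0
    have h2 := key n⁻¹ (by positivity)
    have e5 : (n⁻¹ ^ 2 * n) = n⁻¹ := by field_simp
    rw [e5] at h2
    have h3 : n⁻¹ • (star b * b) ≤ B y y := by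
      have : (2 * n⁻¹) • (star b * b) - n⁻¹ • (star b * b) ≤ B y y := by
        have := sub_le_sub_right h2 (n⁻¹ • (star b * b))
        simpa using this
      rwa [← sub_smul, two_mul, add_sub_cancel_right] at this
    calc star b * b = n • (n⁻¹ • (star b * b)) := by
          rw [smul_smul, mul_inv_cancel₀ hnpos.ne', one_smul]
      _ ≤ n • B y y := smul_le_smul_of_nonneg_left h3 hnpos.le

theorem norm_semiCS (B : X → X → A)
    (hpos : ∀ w, 0 ≤ B w w)
    (haddr : ∀ x y z, B x (y + z) = B x y + B x z)
    (hsmulr : ∀ x y a, B x (M.smulR y a) = B x y * a)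
    (hsmulc : ∀ (c : ℂ) x y, B x (c • y) = c • B x y)
    (hstar : ∀ x y, star (B x y) = B y x) (x y : X) :
    ‖B x y‖ ^ 2 ≤ ‖B x x‖ * ‖B y y‖ := by
  have h := M.semiCS B hpos haddr hsmulr hsmulc hstar x y
  have h1 : ‖star (B x y) * B x y‖ ≤ ‖‖B x x‖ • B y y‖ :=
    CStarAlgebra.norm_le_norm_of_nonneg_of_le (star_mul_self_nonneg _) h
  rw [CStarRing.norm_star_mul_self, norm_smul, Real.norm_of_nonneg (norm_nonneg _)] at h1
  rw [pow_two]
  exact h1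

theorem norm_inner_le (x y : X) : ‖M.inner x y‖ ≤ ‖x‖ * ‖y‖ := by
  have h := M.norm_semiCS M.inner M.inner_self_nonneg M.inner_add_right
    M.inner_smulR_right M.inner_smulC_right M.star_inner x y
  rw [← M.norm_inner_self, ← M.norm_inner_self] at h
  nlinarith [norm_nonneg (M.inner x y), norm_nonneg x, norm_nonneg y,
    mul_nonneg (norm_nonneg x) (norm_nonneg y)]

section OpT

variable (I : Finset X)

/-- The operator `T = Σ_{ξ∈I} θ_{ξ,ξ}`. -/
noncomputable def opT : X → X := fun x => ∑ ξ ∈ I, M.smulR ξ (M.inner ξ x)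

lemma inner_opT_right (w x : X) :
    M.inner w (M.opT I x) = ∑ ξ ∈ I, M.inner w ξ * M.inner ξ x := by
  rw [opT, M.inner_sum_right]
  exact Finset.sum_congr rfl fun ξ _ => M.inner_smulR_right _ _ _

lemma opT_symm (x y : X) : M.inner (M.opT I x) y = M.inner x (M.opT I y) := by
  rw [← M.star_inner, inner_opT_right, inner_opT_right, star_sum]
  exact Finset.sum_congr rfl fun ξ _ => by
    rw [star_mul, M.star_inner, M.star_inner]

lemma opT_add (x y : X) : M.opT I (x + y) = M.opT I x + M.opT I y := by
  simp only [opT, M.inner_add_right, M.smulR_add, Finset.sum_add_distrib]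

lemma opT_smulC (c : ℂ) (x : X) : M.opT I (c • x) = c • M.opT I x := by
  simp only [opT, M.inner_smulC_right, M.smulR_smulC, Finset.smul_sum]

lemma opT_smulR (x : X) (a : A) :
    M.opT I (M.smulR x a) = M.smulR (M.opT I x) a := by
  simp only [opT, M.inner_smulR_right, ← M.smulR_mul, M.sum_smulR]

lemma form_pos (x : X) : 0 ≤ M.inner x (M.opT I x) := by
  rw [inner_opT_right]
  refine Finset.sum_nonneg fun ξ _ => ?_
  rw [← M.star_inner]
  exact star_mul_self_nonneg _

lemma form_le (hI : Subunit M I) (x : X) : M.inner x (M.opT I x) ≤ M.inner x x := by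
  rw [inner_opT_right]; exact hI x

lemma opT_haddr (x y z : X) :
    M.inner x (M.opT I (y + z)) = M.inner x (M.opT I y) + M.inner x (M.opT I z) := by
  rw [opT_add, M.inner_add_right]

lemma opT_hsmulr (x y : X) (a : A) :
    M.inner x (M.opT I (M.smulR y a)) = M.inner x (M.opT I y) * a := by
  rw [opT_smulR, M.inner_smulR_right]

lemma opT_hsmulc (c : ℂ) (x y : X) :
    M.inner x (M.opT I (c • y)) = c • M.inner x (M.opT I y) := by
  rw [opT_smulC, M.inner_smulC_right]

lemma opT_hstar (x y : X) :
    star (M.inner x (M.opT I y)) = M.inner y (M.opT I x) := by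
  rw [M.star_inner, opT_symm]

lemma norm_opT_le (hI : Subunit M I) (x : X) : ‖M.opT I x‖ ≤ ‖x‖ := by
  set B : X → X → A := fun u v => M.inner u (M.opT I v) with hB
  have hcs := M.norm_semiCS B (fun w => M.form_pos I w) (M.opT_haddr I)
    (M.opT_hsmulr I) (M.opT_hsmulc I) (M.opT_hstar I) x (M.opT I x)
  set a := ‖M.opT I x‖ with ha
  have h1 : a ^ 2 = ‖B x (M.opT I x)‖ := by
    rw [hB]
    simp only
    rw [← M.opT_symm, ← M.norm_inner_self]
  have h3 : ‖B x x‖ ≤ ‖x‖ ^ 2 := by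
    rw [M.norm_inner_self]
    exact CStarAlgebra.norm_le_norm_of_nonneg_of_le (M.form_pos I x) (M.form_le I hI x)
  have h4 : ‖B (M.opT I x) (M.opT I x)‖ ≤ a ^ 2 := by
    rw [M.norm_inner_self]
    exact CStarAlgebra.norm_le_norm_of_nonneg_of_le (M.form_pos I _) (M.form_le I hI _)
  have h5 : (a ^ 2) ^ 2 ≤ ‖x‖ ^ 2 * a ^ 2 := by
    calc (a ^ 2) ^ 2 = ‖B x (M.opT I x)‖ ^ 2 := by rw [h1]
      _ ≤ ‖B x x‖ * ‖B (M.opT I x) (M.opT I x)‖ := hcs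
      _ ≤ ‖x‖ ^ 2 * a ^ 2 := mul_le_mul h3 h4 (norm_nonneg _) (by positivity)
  have ha0 : (0:ℝ) ≤ a := ha ▸ norm_nonneg (M.opT I x)
  rcases eq_or_lt_of_le ha0 with h|h
  · rw [← h]; exact norm_nonneg x
  · have h6 : a ^ 2 ≤ ‖x‖ ^ 2 := by nlinarith
    nlinarith [norm_nonneg x]

lemma norm_opT_iterate_le (hI : Subunit M I) (n : ℕ) (x : X) :
    ‖(M.opT I)^[n] x‖ ≤ ‖x‖ := by
  induction n with
  | zero => simp
  | succ n ih =>
    rw [Function.iterate_succ_apply']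
    exact (M.norm_opT_le I hI _).trans ih

lemma opT_iterate_symm (p : ℕ) (x y : X) :
    M.inner ((M.opT I)^[p] x) y = M.inner x ((M.opT I)^[p] y) := by
  induction p generalizing y with
  | zero => simp
  | succ p ih =>
    rw [Function.iterate_succ_apply', M.opT_symm, ih, ← Function.iterate_succ_apply]

lemma opT_iterate_add (p : ℕ) (x y : X) :
    (M.opT I)^[p] (x + y) = (M.opT I)^[p] x + (M.opT I)^[p] y := by
  induction p generalizing x y with
  | zero => simp
  | succ p ih =>
    simp only [Function.iterate_succ_apply]
    rw [M.opT_add, ih]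

lemma opT_iterate_smulC (p : ℕ) (c : ℂ) (x : X) :
    (M.opT I)^[p] (c • x) = c • (M.opT I)^[p] x := by
  induction p generalizing x with
  | zero => simp
  | succ p ih =>
    simp only [Function.iterate_succ_apply]
    rw [M.opT_smulC, ih]

end OpT

lemma opT_sub (I : Finset X) (x y : X) :
    M.opT I (x - y) = M.opT I x - M.opT I y := by
  have h := M.opT_add I (x - y) y
  rw [sub_add_cancel] at h
  rw [h]; abel

end CStarModuleStr

namespace CStarBimoduleStr

variable {Y : Type*} [NormedAddCommGroup Y] [NormedSpace ℂ Y] [CompleteSpace Y]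
variable (N : CStarBimoduleStr A Y)

lemma smulL_zero (a : A) : N.smulL a 0 = 0 := by
  have := N.smulL_add a 0 0
  simpa using this.symm

lemma zero_smulL (y : Y) : N.smulL 0 y = 0 := by
  have := N.add_smulL 0 0 y
  simpa using this.symm

lemma sub_smulL (a b : A) (y : Y) :
    N.smulL (a - b) y = N.smulL a y - N.smulL b y := by
  have h := N.add_smulL (a - b) b y
  rw [sub_add_cancel] at h
  rw [h]; abel

lemma sum_smulL {ι : Type*} (s : Finset ι) (f : ι → A) (y : Y) :
    N.smulL (∑ i ∈ s, f i) y = ∑ i ∈ s, N.smulL (f i) y := by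
  classical
  induction s using Finset.cons_induction with
  | empty => simp [N.zero_smulL]
  | cons i s hi ih => rw [Finset.sum_cons, N.add_smulL, ih, Finset.sum_cons]

end CStarBimoduleStr

section Kernels

variable {X : Type*} [NormedAddCommGroup X] [NormedSpace ℂ X] [CompleteSpace X]
variable {Y : Type*} [NormedAddCommGroup Y] [NormedSpace ℂ Y] [CompleteSpace Y]
variable {Z : Type*} [NormedAddCommGroup Z] [NormedSpace ℂ Z] [CompleteSpace Z]

/-- The pairing `Σ_{k,l} ⟨y_k, c_{k,l}·y_l⟩`. -/
noncomputable def QK (N : CStarBimoduleStr A Y) {n : ℕ} (y : Fin n → Y)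
    (c : Fin n → Fin n → A) : A :=
  ∑ k, ∑ l, N.inner (y k) (N.smulL (c k l) (y l))

variable (N : CStarBimoduleStr A Y)

lemma QK_congr {n : ℕ} (y : Fin n → Y) (c d : Fin n → Fin n → A)
    (h : ∀ k l, c k l = d k l) : QK N y c = QK N y d := by
  unfold QK
  exact Finset.sum_congr rfl fun k _ => Finset.sum_congr rfl fun l _ => by rw [h]

lemma QK_add {n : ℕ} (y : Fin n → Y) (c d : Fin n → Fin n → A) :
    QK N y (fun k l => c k l + d k l) = QK N y c + QK N y d := by
  unfold QK
  simp only [N.add_smulL, N.inner_add_right, Finset.sum_add_distrib]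

lemma QK_sub {n : ℕ} (y : Fin n → Y) (c d : Fin n → Fin n → A) :
    QK N y (fun k l => c k l - d k l) = QK N y c - QK N y d := by
  unfold QK
  simp only [N.sub_smulL, CStarModuleStr.inner_sub_right, Finset.sum_sub_distrib]

lemma QK_sum {n : ℕ} {ι : Type*} (s : Finset ι) (y : Fin n → Y)
    (c : ι → Fin n → Fin n → A) :
    QK N y (fun k l => ∑ i ∈ s, c i k l) = ∑ i ∈ s, QK N y (c i) := by
  unfold QK
  simp only [N.sum_smulL, CStarModuleStr.inner_sum_right]
  refine (Finset.sum_congr rfl fun k _ => Finset.sum_comm).trans Finset.sum_comm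

lemma rank_nonneg {n : ℕ} (y : Fin n → Y) (a : Fin n → A) :
    0 ≤ QK N y (fun k l => star (a k) * a l) := by
  have key : QK N y (fun k l => star (a k) * a l)
      = N.inner (∑ l, N.smulL (a l) (y l)) (∑ l, N.smulL (a l) (y l)) := by
    rw [CStarModuleStr.inner_sum_left, QK]
    refine Finset.sum_congr rfl fun k _ => ?_
    rw [CStarModuleStr.inner_sum_right]
    refine Finset.sum_congr rfl fun l _ => ?_
    rw [N.inner_smulL, N.mul_smulL]
  rw [key]
  exact N.inner_self_nonneg _

lemma gram_nonneg (M : CStarModuleStr A X) (P : CStarModuleStr A Z)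
    (W : InteriorTensorStr A X Y Z M N P) {n : ℕ} (y : Fin n → Y) (u : Fin n → X) :
    0 ≤ QK N y (fun k l => M.inner (u k) (u l)) := by
  have key : QK N y (fun k l => M.inner (u k) (u l))
      = P.inner (∑ k, W.tmul (u k) (y k)) (∑ k, W.tmul (u k) (y k)) := by
    rw [CStarModuleStr.inner_sum_left, QK]
    refine Finset.sum_congr rfl fun k _ => ?_
    rw [CStarModuleStr.inner_sum_right]
    exact Finset.sum_congr rfl fun l _ => (W.inner_tmul _ _ _ _).symm
  rw [key]
  exact P.inner_self_nonneg _

lemma QK_norm_le {n : ℕ} (y : Fin n → Y) (c : Fin n → Fin n → A) :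
    ‖QK N y c‖ ≤ ∑ k, ∑ l, ‖y k‖ * ‖y l‖ * ‖c k l‖ := by
  refine (norm_sum_le _ _).trans (Finset.sum_le_sum fun k _ => ?_)
  refine (norm_sum_le _ _).trans (Finset.sum_le_sum fun l _ => ?_)
  calc ‖N.inner (y k) (N.smulL (c k l) (y l))‖
      ≤ ‖y k‖ * ‖N.smulL (c k l) (y l)‖ := CStarModuleStr.norm_inner_le _ _ _
    _ ≤ ‖y k‖ * (‖c k l‖ * ‖y l‖) := by
        refine mul_le_mul_of_nonneg_left (N.smulL_bound _ _) (norm_nonneg _)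
    _ = ‖y k‖ * ‖y l‖ * ‖c k l‖ := by ring

variable {n : ℕ}

set_option maxHeartbeats 1000000 in
theorem key_matrix_lt (M : CStarModuleStr A X) (P : CStarModuleStr A Z)
    (W : InteriorTensorStr A X Y Z M N P) (I : Finset X) (hI : Subunit M I)
    (x : Fin n → X) (y : Fin n → Y) (c : ℝ) (hc0 : 0 ≤ c) (hc1 : c < 1) :
    0 ≤ QK N y (fun k l =>
      M.inner (x k) (x l) - (c : ℂ) • M.inner (x k) (M.opT I (x l))) := by
  classical
  set cT : X → X := fun v => (c : ℂ) • M.opT I v with hcT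
  set S : X → X := fun v => v - cT v with hS
  -- basic facts
  have hSadd : ∀ u v, S (u + v) = S u + S v := by
    intro u v
    simp only [hS, hcT, M.opT_add, smul_add]
    abel
  have hTS : ∀ v, M.opT I (S v) = S (M.opT I v) := by
    intro v
    simp only [hS, hcT, M.opT_sub, M.opT_smulC]
  have hS_smulC : ∀ (a : ℂ) v, S (a • v) = a • S v := by
    intro a v
    simp only [hS, hcT, M.opT_smulC, smul_sub]
    rw [smul_comm]
  have hcTS : ∀ v, cT (S v) = S (cT v) := by
    intro v
    simp only [hcT]
    rw [hTS, hS_smulC]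
  have hcTS_iter : ∀ m v, cT^[m] (S v) = S (cT^[m] v) := by
    intro m
    induction m with
    | zero => simp
    | succ m ih =>
      intro v
      simp only [Function.iterate_succ_apply]
      rw [hcTS, ih]
  have hcT_iter : ∀ m v, cT^[m] v = ((c ^ m : ℝ) : ℂ) • (M.opT I)^[m] v := by
    intro m
    induction m with
    | zero => simp
    | succ m ih =>
      intro v
      rw [Function.iterate_succ_apply, Function.iterate_succ_apply, ih]
      simp only [hcT]
      rw [M.opT_iterate_smulC, smul_smul, ← Complex.ofReal_mul, ← pow_succ]
  have hSsymm : ∀ u v, M.inner u (S v) = M.inner (S u) v := by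
    intro u v
    simp only [hS, hcT]
    rw [M.inner_sub_right, CStarModuleStr.inner_sub_left, M.inner_smulC_right,
      M.inner_smulC_left, Complex.conj_ofReal, M.opT_symm]
  -- the telescoping identity
  have mini : ∀ w, S w = S (S w) + S (cT w) := by
    intro w
    rw [← hSadd]
    congr 1
    simp only [hS]
    abel
  have identity : ∀ (Nn : ℕ) v, S v = S (S v)
      + (∑ m ∈ Finset.range Nn, S (cT^[m + 1] (S v))) + S (cT^[Nn + 1] v) := by
    intro Nn
    induction Nn with
    | zero =>
      intro v
      simp only [Finset.range_zero, Finset.sum_empty, add_zero, zero_add,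
        Function.iterate_one]
      exact mini v
    | succ Nn ih =>
      intro v
      have h1 : S (cT^[Nn + 1] v) = S (cT^[Nn + 1] (S v)) + S (cT^[Nn + 1 + 1] v) := by
        have e := (Function.iterate_succ_apply' cT (Nn + 1) v).symm
        rw [mini (cT^[Nn + 1] v), hcTS_iter, e]
      calc S v = S (S v) + (∑ m ∈ Finset.range Nn, S (cT^[m + 1] (S v)))
            + S (cT^[Nn + 1] v) := ih v
        _ = S (S v) + (∑ m ∈ Finset.range (Nn + 1), S (cT^[m + 1] (S v)))
            + S (cT^[Nn + 1 + 1] v) := by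
            rw [Finset.sum_range_succ, h1]
            abel
  -- kernels
  set KS : Fin n → Fin n → A := fun k l => M.inner (x k) (S (x l)) with hKS
  set K1 : Fin n → Fin n → A := fun k l => M.inner (x k) (S (S (x l))) with hK1
  set Km : ℕ → Fin n → Fin n → A :=
    fun m k l => M.inner (x k) (S (cT^[m + 1] (S (x l)))) with hKm
  set Kr : ℕ → Fin n → Fin n → A :=
    fun Nn k l => M.inner (x k) (S (cT^[Nn + 1] (x l))) with hKr
  have hsplit : ∀ Nn, QK N y KS = QK N y K1
      + (∑ m ∈ Finset.range Nn, QK N y (Km m)) + QK N y (Kr Nn) := by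
    intro Nn
    rw [← QK_sum N (Finset.range Nn) y Km, ← QK_add, ← QK_add]
    refine QK_congr N y _ _ fun k l => ?_
    simp only [hKS, hK1, hKm, hKr]
    conv_lhs => rw [identity Nn (x l)]
    rw [M.inner_add_right, M.inner_add_right, M.inner_sum_right]
  -- positivity of the head terms
  have posK1 : 0 ≤ QK N y K1 := by
    have : QK N y K1 = QK N y (fun k l => M.inner (S (x k)) (S (x l))) :=
      QK_congr N y _ _ fun k l => by simp only [hK1]; rw [hSsymm]
    rw [this]
    exact gram_nonneg N M P W y _
  have posKm : ∀ m, 0 ≤ QK N y (Km m) := by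
    intro m
    set s : ℝ := Real.sqrt (c ^ (m + 1)) with hs
    have hss : (s : ℂ) * (s : ℂ) = ((c ^ (m + 1) : ℝ) : ℂ) := by
      rw [← Complex.ofReal_mul, Real.mul_self_sqrt (pow_nonneg hc0 _)]
    have htrans : ∀ k l, Km m k l
        = ((c ^ (m + 1) : ℝ) : ℂ) • M.inner (S (x k)) ((M.opT I)^[m + 1] (S (x l))) := by
      intro k l
      simp only [hKm]
      rw [hSsymm, hcT_iter, M.inner_smulC_right]
    rcases Nat.even_or_odd (m + 1) with ⟨p, hp⟩ | ⟨p, hp⟩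
    · -- even : m + 1 = p + p
      have : QK N y (Km m) = QK N y (fun k l =>
          M.inner ((s : ℂ) • (M.opT I)^[p] (S (x k)))
                  ((s : ℂ) • (M.opT I)^[p] (S (x l)))) := by
        refine QK_congr N y _ _ fun k l => ?_
        rw [htrans k l]
        have e2 : (M.opT I)^[m + 1] (S (x l)) = (M.opT I)^[p] ((M.opT I)^[p] (S (x l))) := by
          rw [hp, Function.iterate_add_apply]
        rw [e2, ← M.opT_iterate_symm]
        rw [M.inner_smulC_right, M.inner_smulC_left, Complex.conj_ofReal, smul_smul, hss]
      rw [this]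
      exact gram_nonneg N M P W y _
    · -- odd : m + 1 = 2 * p + 1
      have : QK N y (Km m) = QK N y (fun k l => ∑ ξ ∈ I,
          star ((s : ℂ) • M.inner ξ ((M.opT I)^[p] (S (x k))))
            * ((s : ℂ) • M.inner ξ ((M.opT I)^[p] (S (x l))))) := by
        refine QK_congr N y _ _ fun k l => ?_
        rw [htrans k l]
        have h2 : (M.opT I)^[m + 1] (S (x l))
            = (M.opT I)^[p] (M.opT I ((M.opT I)^[p] (S (x l)))) := by
          rw [hp]
          rw [show 2 * p + 1 = p + (1 + p) by ring, Function.iterate_add_apply,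
            Function.iterate_add_apply, Function.iterate_one]
        rw [h2, ← M.opT_iterate_symm, M.inner_opT_right, Finset.smul_sum]
        refine Finset.sum_congr rfl fun ξ _ => ?_
        rw [star_smul, M.star_inner, smul_mul_assoc, mul_smul_comm, smul_smul,
          Complex.star_def, Complex.conj_ofReal, hss]
      rw [this]
      rw [QK_sum N I y (fun ξ k l =>
        star ((s : ℂ) • M.inner ξ ((M.opT I)^[p] (S (x k))))
          * ((s : ℂ) • M.inner ξ ((M.opT I)^[p] (S (x l)))))]
      exact Finset.sum_nonneg fun ξ _ => rank_nonneg N y _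
  -- remainder estimate
  set Cst : ℝ := (1 + c) * ∑ k, ∑ l, ‖y k‖ * ‖y l‖ * ‖x k‖ * ‖x l‖ with hCst
  have hCst0 : 0 ≤ Cst := by
    refine mul_nonneg (by linarith) ?_
    refine Finset.sum_nonneg fun k _ => Finset.sum_nonneg fun l _ => ?_
    positivity
  have hSnorm : ∀ v, ‖S v‖ ≤ (1 + c) * ‖v‖ := by
    intro v
    simp only [hS, hcT]
    calc ‖v - (c : ℂ) • M.opT I v‖ ≤ ‖v‖ + ‖(c : ℂ) • M.opT I v‖ := norm_sub_le _ _
      _ = ‖v‖ + c * ‖M.opT I v‖ := by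
          rw [norm_smul, Complex.norm_real, Real.norm_of_nonneg hc0]
      _ ≤ ‖v‖ + c * ‖v‖ := by
          have := M.norm_opT_le I hI v
          nlinarith
      _ = (1 + c) * ‖v‖ := by ring
  have hrem : ∀ Nn, ‖QK N y (Kr Nn)‖ ≤ c ^ (Nn + 1) * Cst := by
    intro Nn
    refine (QK_norm_le N y _).trans ?_
    rw [hCst, Finset.mul_sum, Finset.mul_sum]
    simp only [Finset.mul_sum]
    refine Finset.sum_le_sum fun k _ => Finset.sum_le_sum fun l _ => ?_
    have hentry : ‖Kr Nn k l‖ ≤ ‖x k‖ * ((1 + c) * (c ^ (Nn + 1) * ‖x l‖)) := by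
      simp only [hKr]
      refine (M.norm_inner_le _ _).trans ?_
      refine mul_le_mul_of_nonneg_left ?_ (norm_nonneg _)
      refine (hSnorm _).trans ?_
      refine mul_le_mul_of_nonneg_left ?_ (by linarith)
      rw [hcT_iter, norm_smul, Complex.norm_real,
        Real.norm_of_nonneg (pow_nonneg hc0 _)]
      exact mul_le_mul_of_nonneg_left (M.norm_opT_iterate_le I hI _ _) (pow_nonneg hc0 _)
    calc ‖y k‖ * ‖y l‖ * ‖Kr Nn k l‖
        ≤ ‖y k‖ * ‖y l‖ * (‖x k‖ * ((1 + c) * (c ^ (Nn + 1) * ‖x l‖))) := by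
          exact mul_le_mul_of_nonneg_left hentry (by positivity)
      _ = c ^ (Nn + 1) * ((1 + c) * (‖y k‖ * ‖y l‖ * ‖x k‖ * ‖x l‖)) := by ring
  -- limit
  have hrem_tend : Filter.Tendsto (fun Nn => QK N y (Kr Nn)) Filter.atTop (nhds 0) := by
    rw [tendsto_zero_iff_norm_tendsto_zero]
    refine squeeze_zero (fun _ => norm_nonneg _) hrem ?_
    have h := tendsto_pow_atTop_nhds_zero_of_lt_one hc0 hc1
    have h2 : Filter.Tendsto (fun Nn : ℕ => c ^ (Nn + 1) * Cst) Filter.atTop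
        (nhds (0 * Cst)) := (h.comp (Filter.tendsto_add_atTop_nat 1)).mul_const Cst
    simpa using h2
  have hpos_all : ∀ Nn, 0 ≤ QK N y KS - QK N y (Kr Nn) := by
    intro Nn
    rw [hsplit Nn, add_sub_cancel_right]
    exact add_nonneg posK1 (Finset.sum_nonneg fun m _ => posKm m)
  have htend2 : Filter.Tendsto (fun Nn => QK N y KS - QK N y (Kr Nn)) Filter.atTop
      (nhds (QK N y KS)) := by
    simpa using tendsto_const_nhds.sub hrem_tend
  have hfin : 0 ≤ QK N y KS :=
    CStarAlgebra.isClosed_nonneg.mem_of_tendsto htend2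
      (Filter.Eventually.of_forall hpos_all)
  have hgoal : QK N y KS = QK N y (fun k l =>
      M.inner (x k) (x l) - (c : ℂ) • M.inner (x k) (M.opT I (x l))) := by
    refine QK_congr N y _ _ fun k l => ?_
    simp only [hKS, hS, hcT]
    rw [M.inner_sub_right, M.inner_smulC_right]
  rw [← hgoal]
  exact hfin

theorem key_matrix (M : CStarModuleStr A X) (P : CStarModuleStr A Z)
    (W : InteriorTensorStr A X Y Z M N P) (I : Finset X) (hI : Subunit M I)
    (x : Fin n → X) (y : Fin n → Y) :
    0 ≤ QK N y (fun k l =>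
      M.inner (x k) (x l) - M.inner (x k) (M.opT I (x l))) := by
  classical
  set Kgoal : Fin n → Fin n → A := fun k l =>
    M.inner (x k) (x l) - M.inner (x k) (M.opT I (x l)) with hKgoal
  set C2 : ℝ := ∑ k, ∑ l, ‖y k‖ * ‖y l‖ * ‖M.inner (x k) (M.opT I (x l))‖ with hC2
  set c : ℕ → ℝ := fun j => 1 - 1 / (j + 1) with hc
  have hc0 : ∀ j, 0 ≤ c j := by
    intro j
    simp only [hc, sub_nonneg]
    rw [div_le_one (by positivity)]
    linarith [Nat.cast_nonneg (α := ℝ) j]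
  have hc1 : ∀ j, c j < 1 := by
    intro j
    simp only [hc]
    have : (0:ℝ) < 1 / (j + 1) := by positivity
    linarith
  have hpos : ∀ j, 0 ≤ QK N y (fun k l =>
      M.inner (x k) (x l) - (c j : ℂ) • M.inner (x k) (M.opT I (x l))) :=
    fun j => key_matrix_lt N M P W I hI x y (c j) (hc0 j) (hc1 j)
  set dj : ℕ → Fin n → Fin n → A := fun j k l =>
    ((1 - c j : ℝ) : ℂ) • M.inner (x k) (M.opT I (x l)) with hdj
  have eq_j : ∀ j, QK N y (fun k l =>
      M.inner (x k) (x l) - (c j : ℂ) • M.inner (x k) (M.opT I (x l)))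
      = QK N y Kgoal + QK N y (dj j) := by
    intro j
    rw [← QK_add]
    refine QK_congr N y _ _ fun k l => ?_
    simp only [hKgoal, hdj]
    have hcast : ((1 - c j : ℝ) : ℂ) = 1 - (c j : ℂ) := by push_cast; ring
    rw [hcast, sub_smul, one_smul]
    abel
  have hdtend : Filter.Tendsto (fun j => QK N y (dj j)) Filter.atTop (nhds 0) := by
    rw [tendsto_zero_iff_norm_tendsto_zero]
    refine squeeze_zero (f := fun j => ‖QK N y (dj j)‖)
      (g := fun j => 1 / ((j:ℝ) + 1) * C2) (fun _ => norm_nonneg _) ?_ ?_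
    · intro j
      have hc1' : (0:ℝ) ≤ 1 - c j := by
        have := hc1 j; linarith
      have h1c : (1 - c j : ℝ) = 1 / ((j:ℝ) + 1) := by simp only [hc]; ring
      have hentry : ∀ k l : Fin n, ‖y k‖ * ‖y l‖ * ‖dj j k l‖
          = 1 / ((j:ℝ) + 1) * (‖y k‖ * ‖y l‖ * ‖M.inner (x k) (M.opT I (x l))‖) := by
        intro k l
        simp only [hdj]
        rw [norm_smul, Complex.norm_real, Real.norm_of_nonneg hc1', h1c]
        ring
      refine (QK_norm_le N y _).trans ?_
      calc ∑ k, ∑ l, ‖y k‖ * ‖y l‖ * ‖dj j k l‖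
          = ∑ k, ∑ l, 1 / ((j:ℝ) + 1)
              * (‖y k‖ * ‖y l‖ * ‖M.inner (x k) (M.opT I (x l))‖) :=
            Finset.sum_congr rfl fun k _ => Finset.sum_congr rfl fun l _ => hentry k l
        _ = 1 / ((j:ℝ) + 1) * C2 := by
            rw [hC2, Finset.mul_sum]
            exact Finset.sum_congr rfl fun k _ => (Finset.mul_sum _ _ _).symm
        _ ≤ 1 / ((j:ℝ) + 1) * C2 := le_refl _
    · have := tendsto_one_div_add_atTop_nhds_zero_nat (𝕜 := ℝ)
      simpa using this.mul_const C2
  have htend : Filter.Tendsto (fun j => QK N y (fun k l =>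
      M.inner (x k) (x l) - (c j : ℂ) • M.inner (x k) (M.opT I (x l))))
      Filter.atTop (nhds (QK N y Kgoal)) := by
    have heq : (fun j => QK N y (fun k l =>
        M.inner (x k) (x l) - (c j : ℂ) • M.inner (x k) (M.opT I (x l))))
        = fun j => QK N y Kgoal + QK N y (dj j) := funext eq_j
    rw [heq]
    simpa using tendsto_const_nhds.add hdtend
  exact CStarAlgebra.isClosed_nonneg.mem_of_tendsto htend
    (Filter.Eventually.of_forall hpos)

lemma gram_eq (M : CStarModuleStr A X) (P : CStarModuleStr A Z)
    (W : InteriorTensorStr A X Y Z M N P) {m : ℕ} (y : Fin m → Y) (u : Fin m → X) :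
    QK N y (fun k l => M.inner (u k) (u l))
      = P.inner (∑ k, W.tmul (u k) (y k)) (∑ k, W.tmul (u k) (y k)) := by
  rw [CStarModuleStr.inner_sum_left, QK]
  refine Finset.sum_congr rfl fun k _ => ?_
  rw [CStarModuleStr.inner_sum_right]
  exact Finset.sum_congr rfl fun l _ => (W.inner_tmul _ _ _ _).symm

theorem span_case (M : CStarModuleStr A X) (P : CStarModuleStr A Z)
    (W : InteriorTensorStr A X Y Z M N P) (I : Finset X) (hI : Subunit M I)
    (J : Finset Y) (hJ : Subunit N.toCStarModuleStr J)
    (x : Fin n → X) (y : Fin n → Y) :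
    ∑ ξ ∈ I, ∑ ζ ∈ J,
        P.inner (∑ k, W.tmul (x k) (y k)) (W.tmul ξ ζ)
          * P.inner (W.tmul ξ ζ) (∑ k, W.tmul (x k) (y k))
      ≤ P.inner (∑ k, W.tmul (x k) (y k)) (∑ k, W.tmul (x k) (y k)) := by
  classical
  set η : Z := ∑ k, W.tmul (x k) (y k) with hη
  set v : X → Y := fun ξ => ∑ l, N.smulL (M.inner ξ (x l)) (y l) with hv
  have e1 : ∀ ξ ζ, P.inner (W.tmul ξ ζ) η = N.inner ζ (v ξ) := by
    intro ξ ζ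
    rw [hη, CStarModuleStr.inner_sum_right, hv, CStarModuleStr.inner_sum_right]
    exact Finset.sum_congr rfl fun l _ => W.inner_tmul _ _ _ _
  have e2 : ∀ ξ ζ, P.inner η (W.tmul ξ ζ) = N.inner (v ξ) ζ := by
    intro ξ ζ
    rw [← P.star_inner, e1, N.toCStarModuleStr.star_inner]
  have e3 : ∑ ξ ∈ I, N.inner (v ξ) (v ξ)
      = QK N y (fun k l => M.inner (x k) (M.opT I (x l))) := by
    have h1 : ∀ ξ, N.inner (v ξ) (v ξ) = ∑ k, ∑ l,
        N.inner (y k) (N.smulL (M.inner (x k) ξ * M.inner ξ (x l)) (y l)) := by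
      intro ξ
      rw [hv, CStarModuleStr.inner_sum_left]
      refine Finset.sum_congr rfl fun k _ => ?_
      rw [CStarModuleStr.inner_sum_right]
      refine Finset.sum_congr rfl fun l _ => ?_
      rw [N.inner_smulL, N.mul_smulL, M.star_inner]
    rw [QK]
    simp only [h1]
    rw [Finset.sum_comm]
    refine Finset.sum_congr rfl fun k _ => ?_
    rw [Finset.sum_comm]
    refine Finset.sum_congr rfl fun l _ => ?_
    rw [M.inner_opT_right, N.sum_smulL, CStarModuleStr.inner_sum_right]
  have step1 : ∑ ξ ∈ I, ∑ ζ ∈ J,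
      P.inner η (W.tmul ξ ζ) * P.inner (W.tmul ξ ζ) η
      ≤ ∑ ξ ∈ I, N.inner (v ξ) (v ξ) := by
    refine Finset.sum_le_sum fun ξ _ => ?_
    have : ∑ ζ ∈ J, P.inner η (W.tmul ξ ζ) * P.inner (W.tmul ξ ζ) η
        = ∑ ζ ∈ J, N.inner (v ξ) ζ * N.inner ζ (v ξ) :=
      Finset.sum_congr rfl fun ζ _ => by rw [e1, e2]
    rw [this]
    exact hJ (v ξ)
  have step2 : QK N y (fun k l => M.inner (x k) (M.opT I (x l)))
      ≤ QK N y (fun k l => M.inner (x k) (x l)) := by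
    have h := key_matrix N M P W I hI x y
    rw [QK_sub] at h
    exact sub_nonneg.mp h
  have step3 : QK N y (fun k l => M.inner (x k) (x l)) = P.inner η η :=
    gram_eq N M P W y x
  calc ∑ ξ ∈ I, ∑ ζ ∈ J, P.inner η (W.tmul ξ ζ) * P.inner (W.tmul ξ ζ) η
      ≤ ∑ ξ ∈ I, N.inner (v ξ) (v ξ) := step1
    _ = QK N y (fun k l => M.inner (x k) (M.opT I (x l))) := e3
    _ ≤ QK N y (fun k l => M.inner (x k) (x l)) := step2
    _ = P.inner η η := step3

lemma span_repr (M : CStarModuleStr A X) (P : CStarModuleStr A Z)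
    (W : InteriorTensorStr A X Y Z M N P) {z : Z}
    (hz : z ∈ Submodule.span ℂ {z : Z | ∃ x y, z = W.tmul x y}) :
    ∃ (m : ℕ) (x : Fin m → X) (y : Fin m → Y), z = ∑ k, W.tmul (x k) (y k) := by
  rw [Submodule.mem_span_set'] at hz
  obtain ⟨m, f, g, hsum⟩ := hz
  choose xs ys hxy using fun i => (g i).2
  refine ⟨m, fun i => f i • xs i, fun i => ys i, ?_⟩
  rw [← hsum]
  refine Finset.sum_congr rfl fun i _ => ?_
  rw [W.tmul_smulC, ← hxy i]

lemma continuous_of_additive_bound {g : Z → A} {C : ℝ} (hC : 0 ≤ C)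
    (hadd : ∀ a b : Z, g (a + b) = g a + g b) (hb : ∀ a, ‖g a‖ ≤ C * ‖a‖) :
    Continuous g := by
  have hsub : ∀ a b, g (a - b) = g a - g b := by
    intro a b
    have h := hadd (a - b) b
    rw [sub_add_cancel] at h
    exact eq_sub_of_add_eq h.symm
  rw [Metric.continuous_iff]
  intro b ε hε
  refine ⟨ε / (C + 1), by positivity, fun a hab => ?_⟩
  rw [dist_eq_norm] at hab ⊢
  rw [← hsub]
  calc ‖g (a - b)‖ ≤ C * ‖a - b‖ := hb _
    _ ≤ C * (ε / (C + 1)) := mul_le_mul_of_nonneg_left hab.le hC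
    _ < ε := by
        rw [mul_div_assoc']
        rw [div_lt_iff₀ (by positivity)]
        nlinarith

lemma continuous_inner_self (P : CStarModuleStr A Z) :
    Continuous (fun z : Z => P.inner z z) := by
  rw [continuous_iff_continuousAt]
  intro b
  unfold ContinuousAt
  rw [tendsto_iff_norm_sub_tendsto_zero]
  have hbound : ∀ z : Z, ‖P.inner z z - P.inner b b‖
      ≤ ‖z - b‖ * ‖z - b‖ + 2 * ‖b‖ * ‖z - b‖ := by
    intro z
    have hz : P.inner z z - P.inner b b
        = P.inner (z - b) (z - b) + (P.inner (z - b) b + P.inner b (z - b)) := by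
      have h1 : P.inner z z = P.inner ((z - b) + b) ((z - b) + b) := by
        rw [sub_add_cancel]
      rw [h1, P.inner_add_right, CStarModuleStr.inner_add_left,
        CStarModuleStr.inner_add_left]
      abel
    rw [hz]
    refine (norm_add_le _ _).trans ?_
    have b1 := CStarModuleStr.norm_inner_le P (z - b) (z - b)
    have b2 := CStarModuleStr.norm_inner_le P (z - b) b
    have b3 := CStarModuleStr.norm_inner_le P b (z - b)
    have b4 := norm_add_le (P.inner (z - b) b) (P.inner b (z - b))
    nlinarith [norm_nonneg (z - b), norm_nonneg b]
  refine squeeze_zero (fun _ => norm_nonneg _) hbound ?_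
  have hcontzb : Continuous (fun z : Z => ‖z - b‖) :=
    (continuous_id.sub continuous_const).norm
  have hzb : Filter.Tendsto (fun z : Z => ‖z - b‖) (nhds b) (nhds 0) := by
    have h := hcontzb.tendsto b
    simpa using h
  have hsum := (hzb.mul hzb).add (hzb.const_mul (2 * ‖b‖))
  simpa using hsum

lemma continuous_inner_left (P : CStarModuleStr A Z) (w : Z) :
    Continuous (fun z : Z => P.inner z w) := by
  refine continuous_of_additive_bound (C := ‖w‖) (norm_nonneg w)
    (fun a b => CStarModuleStr.inner_add_left P a b w) (fun a => ?_)
  rw [mul_comm]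
  exact CStarModuleStr.norm_inner_le P a w

lemma continuous_inner_right (P : CStarModuleStr A Z) (w : Z) :
    Continuous (fun z : Z => P.inner w z) := by
  refine continuous_of_additive_bound (C := ‖w‖) (norm_nonneg w)
    (fun a b => P.inner_add_right w a b) (fun a => CStarModuleStr.norm_inner_le P w a)

end Kernels


end AuxLemmas
/-- If Σ_{ξ∈I} θ_{ξ,ξ} ≤ 1 in B(X) and Σ_{ζ∈J} θ_{ζ,ζ} ≤ 1 in B(Y), then
Σ_{ξ∈I,ζ∈J} θ_{ξ⊗ζ,ξ⊗ζ} ≤ 1 in B(X ⊗_A Y), the latter expressed via inner products. -/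
theorem tensor_subunit
    {A : Type*} [NonUnitalNormedRing A] [StarRing A] [CStarRing A]
    [NormedSpace ℂ A] [IsScalarTower ℂ A A] [SMulCommClass ℂ A A] [StarModule ℂ A]
    [PartialOrder A] [StarOrderedRing A] [CompleteSpace A]
    {X : Type*} [NormedAddCommGroup X] [NormedSpace ℂ X] [CompleteSpace X]
    {Y : Type*} [NormedAddCommGroup Y] [NormedSpace ℂ Y] [CompleteSpace Y]
    {Z : Type*} [NormedAddCommGroup Z] [NormedSpace ℂ Z] [CompleteSpace Z]
    (M : CStarModuleStr A X) (N : CStarBimoduleStr A Y) (P : CStarModuleStr A Z)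
    (W : InteriorTensorStr A X Y Z M N P)
    (I : Finset X) (hI : Subunit M I)
    (J : Finset Y) (hJ : Subunit N.toCStarModuleStr J) :
    ∀ η : Z, ∑ ξ ∈ I, ∑ ζ ∈ J,
        P.inner η (W.tmul ξ ζ) * P.inner (W.tmul ξ ζ) η ≤ P.inner η η := by
  classical
  letI : NonUnitalCStarAlgebra A := instNUCSA
  have hcont : Continuous (fun η : Z => P.inner η η - ∑ ξ ∈ I, ∑ ζ ∈ J,
      P.inner η (W.tmul ξ ζ) * P.inner (W.tmul ξ ζ) η) := by
    refine (continuous_inner_self P).sub ?_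
    refine continuous_finset_sum _ fun ξ _ => ?_
    refine continuous_finset_sum _ fun ζ _ => ?_
    exact (continuous_inner_left P _).mul (continuous_inner_right P _)
  have hclosed : IsClosed {η : Z | 0 ≤ P.inner η η - ∑ ξ ∈ I, ∑ ζ ∈ J,
      P.inner η (W.tmul ξ ζ) * P.inner (W.tmul ξ ζ) η} :=
    CStarAlgebra.isClosed_nonneg.preimage hcont
  have hsub : ((Submodule.span ℂ {z : Z | ∃ x y, z = W.tmul x y} : Submodule ℂ Z) : Set Z)
      ⊆ {η : Z | 0 ≤ P.inner η η - ∑ ξ ∈ I, ∑ ζ ∈ J,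
        P.inner η (W.tmul ξ ζ) * P.inner (W.tmul ξ ζ) η} := by
    intro z hz
    obtain ⟨m, xx, yy, rfl⟩ := span_repr N M P W hz
    simp only [Set.mem_setOf_eq]
    exact sub_nonneg.mpr (span_case N M P W I hI J hJ xx yy)
  intro η
  have hmem : η ∈ {η : Z | 0 ≤ P.inner η η - ∑ ξ ∈ I, ∑ ζ ∈ J,
      P.inner η (W.tmul ξ ζ) * P.inner (W.tmul ξ ζ) η} := by
    have h2 := closure_minimal hsub hclosed
    have h1 : η ∈ closure ((Submodule.span ℂ {z : Z | ∃ x y, z = W.tmul x y} :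
        Submodule ℂ Z) : Set Z) := by
      rw [W.dense.closure_eq]
      exact Set.mem_univ η
    exact h2 h1
  exact sub_nonneg.mp hmem
end

section
/- Let F be a map on finite traces of a C*-algebra A that is additive, positively homogeneous, monotone (τ ≤ τ' implies Fτ ≤ Fτ'), and weak*-continuous on bounded monotone nets. Suppose τ is a finite trace with Fτ ≤ τ. Then there is a unique decomposition τ = τ₁ + τ₂ where τ₁ = Σ_{n=0}^∞ Fⁿτ₀ for the finite trace τ₀ = τ − Fτ, and Fτ₂ = τ₂; moreover τ₂ = lim_n Fⁿτ (a decreasing limit). -/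
open scoped ENNReal ComplexOrder
open Filter Topology MeasureTheory

section Helpers
open scoped ComplexStarModule
open Filter Topology

variable {A : Type*} [NonUnitalNormedRing A] [StarRing A] [CStarRing A]
  [NormedSpace ℂ A] [IsScalarTower ℂ A A] [SMulCommClass ℂ A A] [StarModule ℂ A]
  [PartialOrder A] [StarOrderedRing A] [CompleteSpace A]

set_option linter.unusedSectionVars false

namespace IsFiniteTrace

lemma map_zero' {τ : A → ℂ} (h : IsFiniteTrace τ) : τ 0 = 0 := by
  have := h.map_smul 0 0
  simpa using this

lemma map_neg' {τ : A → ℂ} (h : IsFiniteTrace τ) (a : A) : τ (-a) = -τ a := by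
  have := h.map_smul (-1) a
  simpa [neg_one_smul] using this

lemma map_sub' {τ : A → ℂ} (h : IsFiniteTrace τ) (a b : A) : τ (a - b) = τ a - τ b := by
  rw [sub_eq_add_neg, h.map_add, h.map_neg', sub_eq_add_neg]

lemma im_eq_zero {τ : A → ℂ} (h : IsFiniteTrace τ) {a : A} (ha : 0 ≤ a) : (τ a).im = 0 := by
  have := h.nonneg a ha
  rw [Complex.le_def] at this
  exact this.2.symm

lemma re_nonneg {τ : A → ℂ} (h : IsFiniteTrace τ) {a : A} (ha : 0 ≤ a) : 0 ≤ (τ a).re := by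
  have := h.nonneg a ha
  rw [Complex.le_def] at this
  exact this.1

protected lemma add {τ τ' : A → ℂ} (h : IsFiniteTrace τ) (h' : IsFiniteTrace τ') :
    IsFiniteTrace (τ + τ') := by
  obtain ⟨C, hC⟩ := h.bounded
  obtain ⟨C', hC'⟩ := h'.bounded
  refine ⟨fun a b => by simp [h.map_add, h'.map_add]; ring,
    fun c a => by simp [h.map_smul, h'.map_smul]; ring,
    fun a ha => add_nonneg (h.nonneg a ha) (h'.nonneg a ha),
    fun a b => by simp [h.tracial a b, h'.tracial a b],
    ⟨C + C', fun a => ?_⟩⟩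
  calc ‖τ a + τ' a‖ ≤ ‖τ a‖ + ‖τ' a‖ := norm_add_le _ _
    _ ≤ C * ‖a‖ + C' * ‖a‖ := add_le_add (hC a) (hC' a)
    _ = (C + C') * ‖a‖ := by ring

lemma sub_of_le {τ τ' : A → ℂ} (h : IsFiniteTrace τ) (h' : IsFiniteTrace τ')
    (hle : ∀ a, 0 ≤ a → τ' a ≤ τ a) : IsFiniteTrace (τ - τ') := by
  obtain ⟨C, hC⟩ := h.bounded
  obtain ⟨C', hC'⟩ := h'.bounded
  refine ⟨fun a b => by simp [h.map_add, h'.map_add]; ring,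
    fun c a => by simp [h.map_smul, h'.map_smul]; ring,
    fun a ha => sub_nonneg.mpr (hle a ha),
    fun a b => by simp [h.tracial a b, h'.tracial a b],
    ⟨C + C', fun a => ?_⟩⟩
  calc ‖τ a - τ' a‖ ≤ ‖τ a‖ + ‖τ' a‖ := norm_sub_le _ _
    _ ≤ C * ‖a‖ + C' * ‖a‖ := add_le_add (hC a) (hC' a)
    _ = (C + C') * ‖a‖ := by ring

end IsFiniteTrace

lemma isFiniteTrace_zero : IsFiniteTrace (0 : A → ℂ) :=
  ⟨fun _ _ => by simp, fun _ _ => by simp, fun _ _ => le_refl 0, fun _ _ => rfl,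
    ⟨0, fun a => by simp⟩⟩

/-- decomposition of an element into positive parts with norm control -/
lemma exists_cone_decomp (a : A) :
    ∃ x y z w : A, 0 ≤ x ∧ 0 ≤ y ∧ 0 ≤ z ∧ 0 ≤ w ∧
      ‖x‖ ≤ ‖a‖ ∧ ‖y‖ ≤ ‖a‖ ∧ ‖z‖ ≤ ‖a‖ ∧ ‖w‖ ≤ ‖a‖ ∧
      a = x - y + Complex.I • (z - w) := by
  letI : NonUnitalCStarAlgebra A :=
    { ‹NonUnitalNormedRing A›, ‹StarRing A›, ‹CStarRing A›, ‹CompleteSpace A›,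
      ‹NormedSpace ℂ A›, ‹IsScalarTower ℂ A A›, ‹SMulCommClass ℂ A A›, ‹StarModule ℂ A› with }
  have hre : ‖(ℜ a : A)‖ ≤ ‖a‖ := by
    rw [realPart_apply_coe]
    have h1 : ‖(2 : ℝ)⁻¹ • (a + star a)‖ = (2:ℝ)⁻¹ * ‖a + star a‖ := by
      rw [norm_smul, Real.norm_eq_abs]; norm_num
    have h2 : ‖a + star a‖ ≤ ‖a‖ + ‖star a‖ := norm_add_le _ _
    rw [norm_star] at h2
    rw [h1]; linarith
  have him : ‖(ℑ a : A)‖ ≤ ‖a‖ := by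
    rw [imaginaryPart_apply_coe]
    have h1 : ‖(-Complex.I) • (2 : ℝ)⁻¹ • (a - star a)‖ = ‖(2 : ℝ)⁻¹ • (a - star a)‖ := by
      rw [norm_smul]; simp
    have h2 : ‖(2 : ℝ)⁻¹ • (a - star a)‖ = (2:ℝ)⁻¹ * ‖a - star a‖ := by
      rw [norm_smul, Real.norm_eq_abs]; norm_num
    have h3 : ‖a - star a‖ ≤ ‖a‖ + ‖star a‖ := norm_sub_le _ _
    rw [norm_star] at h3
    rw [h1, h2]; linarith
  have hpos : ∀ b : A, IsSelfAdjoint b → ‖b⁺‖ ≤ ‖b‖ := by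
    intro b hb
    rw [CFC.posPart_def]
    refine norm_cfcₙ_le fun x hx => ?_
    have h1 : ‖(id x : ℝ)‖ ≤ ‖cfcₙ (id : ℝ → ℝ) b‖ := norm_apply_le_norm_cfcₙ id b hx
    rw [cfcₙ_id ℝ b] at h1
    refine le_trans ?_ h1
    simp only [Real.norm_eq_abs, _root_.posPart_def, id]
    rcases le_total x 0 with h | h
    · simp [max_eq_right h]
    · simp [max_eq_left h, abs_of_nonneg h]
  have hneg : ∀ b : A, IsSelfAdjoint b → ‖b⁻‖ ≤ ‖b‖ := by
    intro b hb
    rw [CFC.negPart_def]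
    refine norm_cfcₙ_le fun x hx => ?_
    have h1 : ‖(id x : ℝ)‖ ≤ ‖cfcₙ (id : ℝ → ℝ) b‖ := norm_apply_le_norm_cfcₙ id b hx
    rw [cfcₙ_id ℝ b] at h1
    refine le_trans ?_ h1
    simp only [Real.norm_eq_abs, _root_.negPart_def, id]
    rcases le_total 0 x with h | h
    · simp [max_eq_right (neg_nonpos.mpr h)]
    · simp [max_eq_left (neg_nonneg.mpr h), abs_of_nonpos h]
  refine ⟨(ℜ a : A)⁺, (ℜ a : A)⁻, (ℑ a : A)⁺, (ℑ a : A)⁻,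
    CFC.posPart_nonneg _, CFC.negPart_nonneg _, CFC.posPart_nonneg _, CFC.negPart_nonneg _,
    le_trans (hpos _ (ℜ a).2) hre, le_trans (hneg _ (ℜ a).2) hre,
    le_trans (hpos _ (ℑ a).2) him, le_trans (hneg _ (ℑ a).2) him, ?_⟩
  have h := CStarAlgebra.linear_combination_nonneg a
  conv_lhs => rw [← h]
  rw [smul_sub]

/-- evaluation of an additive, ℂ-homogeneous functional on the decomposition -/
lemma eval_decomp {φ : A → ℂ} (hadd : ∀ a b, φ (a + b) = φ a + φ b)
    (hsmul : ∀ (c : ℂ) a, φ (c • a) = c * φ a) {a x y z w : A}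
    (h : a = x - y + Complex.I • (z - w)) :
    φ a = φ x - φ y + Complex.I * (φ z - φ w) := by
  have hneg : ∀ b, φ (-b) = -φ b := fun b => by
    have := hsmul (-1) b; simpa [neg_one_smul] using this
  have hsub : ∀ b c, φ (b - c) = φ b - φ c := fun b c => by
    rw [sub_eq_add_neg, hadd, hneg, sub_eq_add_neg]
  rw [h, hadd, hsub, hsmul, hsub]

end Helpers

section S9

variable {A : Type*} [NonUnitalNormedRing A] [StarRing A] [CStarRing A]
    [NormedSpace ℂ A] [IsScalarTower ℂ A A] [SMulCommClass ℂ A A] [StarModule ℂ A]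
    [PartialOrder A] [StarOrderedRing A] [CompleteSpace A]

/-- Wold-type decomposition of a finite trace `τ` with `Fτ ≤ τ` relative to
an additive, positively homogeneous, monotone transfer operator `F` which is continuous
on bounded monotone (decreasing) nets: `τ = τ₁ + τ₂`, uniquely, with
`τ₁ = Σ_{n≥0} Fⁿτ₀`, `τ₀ = τ − Fτ`, and `Fτ₂ = τ₂ = lim_n Fⁿτ` (a decreasing limit). -/
theorem trace_wold_decomposition
    (F : (A → ℂ) → (A → ℂ))
    (hF_trace : ∀ τ, IsFiniteTrace τ → IsFiniteTrace (F τ))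
    (hF_add : ∀ τ τ', IsFiniteTrace τ → IsFiniteTrace τ' → F (τ + τ') = F τ + F τ')
    (hF_hom : ∀ (r : NNReal) τ, IsFiniteTrace τ → F ((r : ℂ) • τ) = (r : ℂ) • F τ)
    (hF_mono : ∀ τ τ', IsFiniteTrace τ → IsFiniteTrace τ' →
      (∀ a, 0 ≤ a → τ a ≤ τ' a) → ∀ a, 0 ≤ a → F τ a ≤ F τ' a)
    (hF_cont : ∀ (σ : ℕ → A → ℂ) (σ' : A → ℂ),
      (∀ n, IsFiniteTrace (σ n)) → IsFiniteTrace σ' →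
      (∀ n a, 0 ≤ a → σ (n + 1) a ≤ σ n a) →
      (∀ a, Filter.Tendsto (fun n => σ n a) Filter.atTop (nhds (σ' a))) →
      ∀ a, Filter.Tendsto (fun n => F (σ n) a) Filter.atTop (nhds (F σ' a)))
    (τ : A → ℂ) (hτ : IsFiniteTrace τ)
    (hle : ∀ a, 0 ≤ a → F τ a ≤ τ a) :
    ∃ τ₂ : A → ℂ, IsFiniteTrace τ₂ ∧
      (∀ n a, 0 ≤ a → F^[n + 1] τ a ≤ F^[n] τ a) ∧
      (∀ a, Filter.Tendsto (fun n => F^[n] τ a) Filter.atTop (nhds (τ₂ a))) ∧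
      F τ₂ = τ₂ ∧
      (∀ a, HasSum (fun n => F^[n] (τ - F τ) a) (τ a - τ₂ a)) ∧
      (∀ τ₀' τ₂' : A → ℂ, IsFiniteTrace τ₀' → IsFiniteTrace τ₂' → F τ₂' = τ₂' →
        (∀ a, HasSum (fun n => F^[n] τ₀' a) (τ a - τ₂' a)) →
        τ₀' = τ - F τ ∧ τ₂' = τ₂) := by
  classical
  -- the iterates of τ under F
  set σ : ℕ → A → ℂ := fun n => F^[n] τ with hσdef
  have hσ0 : σ 0 = τ := rfl
  have hσS : ∀ n, σ (n + 1) = F (σ n) := fun n => Function.iterate_succ_apply' F n τ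
  have hσtr : ∀ n, IsFiniteTrace (σ n) := by
    intro n
    induction n with
    | zero => exact hτ
    | succ n ih => rw [hσS]; exact hF_trace _ ih
  have hmono : ∀ n a, 0 ≤ a → σ (n + 1) a ≤ σ n a := by
    intro n
    induction n with
    | zero =>
      intro a ha
      rw [hσS 0, hσ0]
      exact hle a ha
    | succ n ih =>
      intro a ha
      rw [hσS (n + 1), hσS n]
      exact hF_mono _ _ (hσS n ▸ hσtr (n + 1)) (hσtr n)
        (fun b hb => by rw [← hσS n]; exact ih b hb) a ha
  -- convergence on positive elements
  have hexpos : ∀ a : A, 0 ≤ a → ∃ l : ℝ, 0 ≤ l ∧ (∀ n, l ≤ (σ n a).re) ∧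
      Tendsto (fun n => σ n a) atTop (𝓝 ((l : ℝ) : ℂ)) := by
    intro a ha
    have hanti : Antitone fun n => (σ n a).re :=
      antitone_nat_of_succ_le fun n => (Complex.le_def.mp (hmono n a ha)).1
    have hbdd : BddBelow (Set.range fun n => (σ n a).re) := by
      refine ⟨0, ?_⟩
      rintro x ⟨n, rfl⟩
      exact (hσtr n).re_nonneg ha
    have htd : Tendsto (fun n => (σ n a).re) atTop (𝓝 (⨅ n, (σ n a).re)) :=
      tendsto_atTop_ciInf hanti hbdd
    refine ⟨⨅ n, (σ n a).re, le_ciInf fun n => (hσtr n).re_nonneg ha,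
      fun n => ciInf_le hbdd n, ?_⟩
    have heq : ∀ n, σ n a = (((σ n a).re : ℝ) : ℂ) := fun n =>
      Complex.ext (by simp) (by simp [(hσtr n).im_eq_zero ha])
    exact (((Complex.continuous_ofReal.tendsto _).comp htd).congr fun n => (heq n).symm)
  -- convergence everywhere
  have hex : ∀ a : A, ∃ c : ℂ, Tendsto (fun n => σ n a) atTop (𝓝 c) := by
    intro a
    obtain ⟨x, y, z, w, hx, hy, hz, hw, -, -, -, -, hdecomp⟩ := exists_cone_decomp a
    obtain ⟨lx, -, -, hlx⟩ := hexpos x hx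
    obtain ⟨ly, -, -, hly⟩ := hexpos y hy
    obtain ⟨lz, -, -, hlz⟩ := hexpos z hz
    obtain ⟨lw, -, -, hlw⟩ := hexpos w hw
    refine ⟨(lx : ℂ) - ly + Complex.I * ((lz : ℂ) - lw), ?_⟩
    have heval : ∀ n, σ n a = σ n x - σ n y + Complex.I * (σ n z - σ n w) := fun n =>
      eval_decomp (hσtr n).map_add (hσtr n).map_smul hdecomp
    exact (((hlx.sub hly).add ((hlz.sub hlw).const_mul Complex.I)).congr
      fun n => (heval n).symm)
  -- the limit trace
  set τ₂ : A → ℂ := fun a => limUnder atTop fun n => σ n a with hτ₂def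
  have htend : ∀ a, Tendsto (fun n => σ n a) atTop (𝓝 (τ₂ a)) := by
    intro a
    obtain ⟨c, hc⟩ := hex a
    have h1 : τ₂ a = c := hc.limUnder_eq
    rw [h1]
    exact hc
  have hadd₂ : ∀ a b, τ₂ (a + b) = τ₂ a + τ₂ b := fun a b =>
    tendsto_nhds_unique (htend (a + b))
      (((htend a).add (htend b)).congr fun n => ((hσtr n).map_add a b).symm)
  have hsmul₂ : ∀ (c : ℂ) a, τ₂ (c • a) = c * τ₂ a := fun c a =>
    tendsto_nhds_unique (htend (c • a))
      (((htend a).const_mul c).congr fun n => ((hσtr n).map_smul c a).symm)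
  have hpos₂ : ∀ a : A, 0 ≤ a → 0 ≤ τ₂ a ∧ τ₂ a ≤ τ a := by
    intro a ha
    obtain ⟨l, hl0, hln, hlt⟩ := hexpos a ha
    have h2 : τ₂ a = (l : ℂ) := tendsto_nhds_unique (htend a) hlt
    constructor
    · rw [h2]; exact Complex.zero_le_real.mpr hl0
    · rw [h2, Complex.le_def]
      constructor
      · have h0 := hln 0; rw [hσ0] at h0; simpa using h0
      · simp [hτ.im_eq_zero ha]
  have htr₂ : ∀ a b, τ₂ (a * b) = τ₂ (b * a) := fun a b =>
    tendsto_nhds_unique (htend (a * b))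
      ((htend (b * a)).congr fun n => ((hσtr n).tracial a b).symm)
  have hbdd₂ : ∃ C : ℝ, ∀ a, ‖τ₂ a‖ ≤ C * ‖a‖ := by
    obtain ⟨C, hC⟩ := hτ.bounded
    refine ⟨4 * max C 0, fun a => ?_⟩
    obtain ⟨x, y, z, w, hx, hy, hz, hw, hnx, hny, hnz, hnw, hdecomp⟩ := exists_cone_decomp a
    have key : ∀ u : A, 0 ≤ u → ‖u‖ ≤ ‖a‖ → ‖τ₂ u‖ ≤ max C 0 * ‖a‖ := by
      intro u hu hua
      obtain ⟨h0, hle'⟩ := hpos₂ u hu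
      have him : (τ₂ u).im = 0 := ((Complex.le_def.mp h0).2).symm
      have hre0 : 0 ≤ (τ₂ u).re := (Complex.le_def.mp h0).1
      have h1 : ‖τ₂ u‖ = (τ₂ u).re := by
        rw [show τ₂ u = (((τ₂ u).re : ℝ) : ℂ) from Complex.ext rfl (by simp [him])]
        simpa using abs_of_nonneg hre0
      have h2 : (τ₂ u).re ≤ (τ u).re := (Complex.le_def.mp hle').1
      have h3 : (τ u).re ≤ ‖τ u‖ := Complex.re_le_norm _
      calc ‖τ₂ u‖ = (τ₂ u).re := h1
        _ ≤ (τ u).re := h2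
        _ ≤ ‖τ u‖ := h3
        _ ≤ C * ‖u‖ := hC u
        _ ≤ max C 0 * ‖u‖ := mul_le_mul_of_nonneg_right (le_max_left C 0) (norm_nonneg u)
        _ ≤ max C 0 * ‖a‖ := mul_le_mul_of_nonneg_left hua (le_max_right C 0)
    have heval : τ₂ a = τ₂ x - τ₂ y + Complex.I * (τ₂ z - τ₂ w) :=
      eval_decomp hadd₂ hsmul₂ hdecomp
    have hIb : ‖Complex.I * (τ₂ z - τ₂ w)‖ = ‖τ₂ z - τ₂ w‖ := by
      rw [norm_mul, Complex.norm_I, one_mul]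
    calc ‖τ₂ a‖ = ‖τ₂ x - τ₂ y + Complex.I * (τ₂ z - τ₂ w)‖ := by rw [heval]
      _ ≤ ‖τ₂ x - τ₂ y‖ + ‖Complex.I * (τ₂ z - τ₂ w)‖ := norm_add_le _ _
      _ = ‖τ₂ x - τ₂ y‖ + ‖τ₂ z - τ₂ w‖ := by rw [hIb]
      _ ≤ (‖τ₂ x‖ + ‖τ₂ y‖) + (‖τ₂ z‖ + ‖τ₂ w‖) :=
          add_le_add (norm_sub_le _ _) (norm_sub_le _ _)
      _ ≤ (max C 0 * ‖a‖ + max C 0 * ‖a‖) + (max C 0 * ‖a‖ + max C 0 * ‖a‖) :=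
          add_le_add (add_le_add (key x hx hnx) (key y hy hny))
            (add_le_add (key z hz hnz) (key w hw hnw))
      _ = 4 * max C 0 * ‖a‖ := by ring
  have hτ₂tr : IsFiniteTrace τ₂ := ⟨hadd₂, hsmul₂, fun a ha => (hpos₂ a ha).1, htr₂, hbdd₂⟩
  -- fixed point
  have hfix : F τ₂ = τ₂ := by
    funext a
    refine tendsto_nhds_unique (hF_cont σ τ₂ hσtr hτ₂tr hmono htend a) ?_
    have h1 : Tendsto (fun n => σ (n + 1) a) atTop (𝓝 (τ₂ a)) :=
      (htend a).comp (tendsto_add_atTop_nat 1)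
    exact h1.congr fun n => congrFun (hσS n) a
  -- the series
  set τ₀ : A → ℂ := τ - F τ with hτ₀def
  have hτ₀tr : IsFiniteTrace τ₀ := hτ.sub_of_le (hF_trace τ hτ) hle
  have hdiff_tr : ∀ n, IsFiniteTrace (σ n - σ (n + 1)) := fun n =>
    (hσtr n).sub_of_le (hσtr (n + 1)) (hmono n)
  have hFn : ∀ n, F^[n] τ₀ = σ n - σ (n + 1) := by
    intro n
    induction n with
    | zero =>
      show τ₀ = σ 0 - σ 1
      rw [hσS 0, hσ0]
    | succ n ih =>
      have h1 : F ((σ n - σ (n + 1)) + σ (n + 1)) = F (σ n - σ (n + 1)) + F (σ (n + 1)) :=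
        hF_add _ _ (hdiff_tr n) (hσtr (n + 1))
      rw [sub_add_cancel] at h1
      have h2 : F^[n + 1] τ₀ = F (F^[n] τ₀) := Function.iterate_succ_apply' F n τ₀
      rw [h2, ih]
      exact (eq_sub_of_add_eq h1.symm).trans (by rw [← hσS n, ← hσS (n + 1)])
  have hτ₀ntr : ∀ n, IsFiniteTrace (F^[n] τ₀) := fun n => (hFn n) ▸ hdiff_tr n
  have hsum_pos : ∀ a : A, 0 ≤ a → HasSum (fun n => F^[n] τ₀ a) (τ a - τ₂ a) := by
    intro a ha
    set g : ℕ → ℝ := fun i => (σ i a).re - (σ (i + 1) a).re with hgdef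
    have hg0 : ∀ i, 0 ≤ g i := fun i =>
      sub_nonneg.mpr (Complex.le_def.mp (hmono i a ha)).1
    have h1 : ∀ m, ∑ i ∈ Finset.range m, g i = (τ a).re - (σ m a).re := by
      intro m
      rw [show (∑ i ∈ Finset.range m, g i)
            = ∑ i ∈ Finset.range m, ((σ i a).re - (σ (i + 1) a).re) from rfl,
        Finset.sum_range_sub' (fun i => (σ i a).re) m, hσ0]
    have h2 : Tendsto (fun m => (σ m a).re) atTop (𝓝 ((τ₂ a).re)) :=
      (Complex.continuous_re.tendsto _).comp (htend a)
    have hpart : Tendsto (fun m => ∑ i ∈ Finset.range m, g i) atTop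
        (𝓝 ((τ a).re - (τ₂ a).re)) :=
      ((tendsto_const_nhds (x := (τ a).re)).sub h2).congr fun m => (h1 m).symm
    have hgsum : HasSum g ((τ a).re - (τ₂ a).re) :=
      (hasSum_iff_tendsto_nat_of_nonneg hg0 _).mpr hpart
    have hC : HasSum (fun i => ((g i : ℝ) : ℂ)) ((((τ a).re - (τ₂ a).re : ℝ)) : ℂ) :=
      hgsum.mapL Complex.ofRealCLM
    have heq : (fun i => ((g i : ℝ) : ℂ)) = fun i => F^[i] τ₀ a := by
      funext i
      have h3 : F^[i] τ₀ a = σ i a - σ (i + 1) a := by rw [hFn i]; rfl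
      refine Complex.ext ?_ ?_
      · simp [h3, hgdef]
      · simp [(hτ₀ntr i).im_eq_zero ha]
    have hval : ((((τ a).re - (τ₂ a).re : ℝ)) : ℂ) = τ a - τ₂ a := by
      refine Complex.ext ?_ ?_
      · simp
      · simp [hτ.im_eq_zero ha, hτ₂tr.im_eq_zero ha]
    rw [heq, hval] at hC
    exact hC
  have hsum : ∀ a : A, HasSum (fun n => F^[n] τ₀ a) (τ a - τ₂ a) := by
    intro a
    obtain ⟨x, y, z, w, hx, hy, hz, hw, -, -, -, -, hdecomp⟩ := exists_cone_decomp a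
    have Hx := hsum_pos x hx
    have Hy := hsum_pos y hy
    have Hz := hsum_pos z hz
    have Hw := hsum_pos w hw
    have hterm : ∀ n, F^[n] τ₀ a
        = F^[n] τ₀ x - F^[n] τ₀ y + Complex.I * (F^[n] τ₀ z - F^[n] τ₀ w) := fun n =>
      eval_decomp (hτ₀ntr n).map_add (hτ₀ntr n).map_smul hdecomp
    have hcomb := (Hx.sub Hy).add ((Hz.sub Hw).mul_left Complex.I)
    have hfun : (fun n => F^[n] τ₀ x - F^[n] τ₀ y
        + Complex.I * (F^[n] τ₀ z - F^[n] τ₀ w)) = fun n => F^[n] τ₀ a :=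
      funext fun n => (hterm n).symm
    rw [hfun] at hcomb
    have hval : (τ x - τ₂ x) - (τ y - τ₂ y)
        + Complex.I * ((τ z - τ₂ z) - (τ w - τ₂ w)) = τ a - τ₂ a := by
      rw [eval_decomp hτ.map_add hτ.map_smul hdecomp,
        eval_decomp hadd₂ hsmul₂ hdecomp]
      ring
    rw [hval] at hcomb
    exact hcomb
  refine ⟨τ₂, hτ₂tr, hmono, htend, hfix, hsum, ?_⟩
  -- uniqueness
  intro τ₀' τ₂' hτ₀' hτ₂' hfix' hsum'
  have hρtr : ∀ n, IsFiniteTrace (F^[n] τ₀') := by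
    intro n
    induction n with
    | zero => exact hτ₀'
    | succ n ih => rw [Function.iterate_succ_apply']; exact hF_trace _ ih
  have hρS : ∀ n, F^[n + 1] τ₀' = F (F^[n] τ₀') := fun n =>
    Function.iterate_succ_apply' F n τ₀'
  set S : ℕ → A → ℂ := fun m a => ∑ i ∈ Finset.range m, F^[i] τ₀' a with hSdef
  have hS0 : S 0 = 0 := funext fun a => Finset.sum_range_zero _
  have hSsucc : ∀ m, S (m + 1) = S m + F^[m] τ₀' := fun m =>
    funext fun a => Finset.sum_range_succ _ m
  have hStr : ∀ m, IsFiniteTrace (S m) := by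
    intro m
    induction m with
    | zero => rw [hS0]; exact isFiniteTrace_zero
    | succ m ih => rw [hSsucc]; exact ih.add (hρtr m)
  have hS_le : ∀ m a, 0 ≤ a → S m a ≤ τ a - τ₂' a := by
    intro m a ha
    have hre : HasSum (fun n => (F^[n] τ₀' a).re) ((τ a - τ₂' a).re) :=
      (hsum' a).mapL Complex.reCLM
    have h1 : ∑ i ∈ Finset.range m, (F^[i] τ₀' a).re ≤ (τ a - τ₂' a).re :=
      sum_le_hasSum _ (fun i _ => (hρtr i).re_nonneg ha) hre
    rw [Complex.le_def]
    constructor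
    · have h2 : (S m a).re = ∑ i ∈ Finset.range m, (F^[i] τ₀' a).re := by
        simp only [hSdef]; exact Complex.re_sum _ _
      rw [h2]; exact h1
    · have h2 : (S m a).im = 0 := by
        simp only [hSdef]
        rw [Complex.im_sum]
        exact Finset.sum_eq_zero fun i _ => (hρtr i).im_eq_zero ha
      have h3 : (τ a - τ₂' a).im = 0 := by
        simp [Complex.sub_im, hτ.im_eq_zero ha, hτ₂'.im_eq_zero ha]
      rw [h2, h3]
  have hτ₂'_le : ∀ a, 0 ≤ a → τ₂' a ≤ τ a := by
    intro a ha
    have h0 := hS_le 0 a ha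
    rw [hS0] at h0
    have h1 : (0 : ℂ) ≤ τ a - τ₂' a := h0
    exact sub_nonneg.mp h1
  set ν : A → ℂ := τ - τ₂' with hνdef
  have hνtr : IsFiniteTrace ν := hτ.sub_of_le hτ₂' hτ₂'_le
  set μ : ℕ → A → ℂ := fun m => ν - S m with hμdef
  have hμtr : ∀ m, IsFiniteTrace (μ m) := fun m =>
    hνtr.sub_of_le (hStr m) fun a ha => hS_le m a ha
  have hμdec : ∀ m a, 0 ≤ a → μ (m + 1) a ≤ μ m a := by
    intro m a ha
    show ν a - S (m + 1) a ≤ ν a - S m a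
    apply sub_le_sub_left
    rw [hSsucc]
    show S m a ≤ S m a + F^[m] τ₀' a
    exact le_add_of_nonneg_right ((hρtr m).nonneg a ha)
  have hμ0 : ∀ a, Tendsto (fun m => μ m a) atTop (𝓝 ((0 : A → ℂ) a)) := by
    intro a
    have h1 : Tendsto (fun m => S m a) atTop (𝓝 (τ a - τ₂' a)) :=
      (hsum' a).tendsto_sum_nat
    have h2 := (tendsto_const_nhds (x := ν a)).sub h1
    have h3 : ν a - (τ a - τ₂' a) = (0 : A → ℂ) a := by
      show (τ a - τ₂' a) - (τ a - τ₂' a) = 0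
      ring
    rw [h3] at h2
    exact h2
  have hF0 : F 0 = 0 := by
    have h := hF_hom 0 0 isFiniteTrace_zero
    simpa using h
  have hFμ : ∀ a, Tendsto (fun m => F (μ m) a) atTop (𝓝 0) := by
    have h := hF_cont μ 0 hμtr isFiniteTrace_zero hμdec hμ0
    intro a
    have h2 := h a
    rw [hF0] at h2
    exact h2
  have hFS : ∀ m, F (S m) = fun a => ∑ i ∈ Finset.range m, F^[i + 1] τ₀' a := by
    intro m
    induction m with
    | zero =>
      rw [hS0, hF0]
      exact funext fun a => (Finset.sum_range_zero _).symm
    | succ m ih =>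
      rw [hSsucc, hF_add _ _ (hStr m) (hρtr m), ih, ← hρS m]
      funext a
      show (∑ i ∈ Finset.range m, F^[i + 1] τ₀' a) + F^[m + 1] τ₀' a
        = ∑ i ∈ Finset.range (m + 1), F^[i + 1] τ₀' a
      exact (Finset.sum_range_succ _ m).symm
  have hkey : ∀ a, F τ a = τ a - τ₀' a := by
    intro a
    have hid : ∀ m, F τ a = (∑ i ∈ Finset.range m, F^[i + 1] τ₀' a) + F (μ m) a + τ₂' a := by
      intro m
      have hsplit : τ = S m + (μ m + τ₂') := by
        funext b
        show τ b = S m b + (((τ b - τ₂' b) - S m b) + τ₂' b)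
        ring
      calc F τ a = F (S m + (μ m + τ₂')) a := by rw [← hsplit]
        _ = F (S m) a + (F (μ m) a + F τ₂' a) := by
            rw [hF_add _ _ (hStr m) ((hμtr m).add hτ₂'), hF_add _ _ (hμtr m) hτ₂']
            rfl
        _ = (∑ i ∈ Finset.range m, F^[i + 1] τ₀' a) + F (μ m) a + τ₂' a := by
            rw [hFS m, hfix']
            ring
    have h1 : ∀ m, ∑ i ∈ Finset.range m, F^[i + 1] τ₀' a
        = (∑ i ∈ Finset.range (m + 1), F^[i] τ₀' a) - τ₀' a := by
      intro m
      rw [Finset.sum_range_succ' (fun i => F^[i] τ₀' a) m]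
      simp
    have h2 : Tendsto (fun m => ∑ i ∈ Finset.range (m + 1), F^[i] τ₀' a) atTop
        (𝓝 (τ a - τ₂' a)) :=
      ((hsum' a).tendsto_sum_nat).comp (tendsto_add_atTop_nat 1)
    have hT : Tendsto (fun m => ∑ i ∈ Finset.range m, F^[i + 1] τ₀' a) atTop
        (𝓝 ((τ a - τ₂' a) - τ₀' a)) :=
      (h2.sub (tendsto_const_nhds (x := τ₀' a))).congr fun m => (h1 m).symm
    have hRHS : Tendsto
        (fun m => (∑ i ∈ Finset.range m, F^[i + 1] τ₀' a) + F (μ m) a + τ₂' a) atTop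
        (𝓝 (((τ a - τ₂' a) - τ₀' a) + 0 + τ₂' a)) :=
      (hT.add (hFμ a)).add tendsto_const_nhds
    have h3 : F τ a = ((τ a - τ₂' a) - τ₀' a) + 0 + τ₂' a :=
      tendsto_nhds_unique tendsto_const_nhds (hRHS.congr fun m => (hid m).symm)
    rw [h3]
    ring
  have hτ₀'eq : τ₀' = τ - F τ := by
    funext a
    show τ₀' a = τ a - F τ a
    rw [hkey a]
    ring
  refine ⟨hτ₀'eq, funext fun a => ?_⟩
  have h1 := hsum' a
  rw [hτ₀'eq] at h1
  have h2 := hsum a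
  have h3 := h1.unique h2
  exact sub_right_inj.mp h3


end S9
end

section
/- Let A be a unital C*-algebra, p a full projection in A, and α an injective *-endomorphism of A with α(A) = pAp. Form the Hilbert A-bimodule X = Ap with a·ξ·b = aξα(b) and ⟨ξ,ζ⟩ = α^{-1}(ξ*ζ). Then for any tracial state τ on A, the induced trace satisfies Tr_τ(α(a)) = τ(a) for all a ∈ A, where α(a) acts on X by left multiplication; consequently the transfer condition e^{-β}Tr_τ(a) ≤ τ(a) on A₊ is equivalent to e^{-β}τ ≤ τ∘α. -/
open scoped ENNReal ComplexOrder
open Filter Topology MeasureTheory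

section MyAux
open scoped ComplexOrder
variable {A : Type*} [CStarAlgebra A] [PartialOrder A] [StarOrderedRing A]

/-- A multiplicative star-preserving map preserves nonnegativity. -/
lemma myaux_alpha_nonneg (α : A → A)
    (hmul : ∀ a b, α (a * b) = α a * α b)
    (hstar : ∀ a, α (star a) = star (α a)) {c : A} (hc : 0 ≤ c) : 0 ≤ α c := by
  have h := CFC.sqrt_mul_sqrt_self c hc
  have hs : star (CFC.sqrt c) = CFC.sqrt c :=
    (IsSelfAdjoint.of_nonneg (CFC.sqrt_nonneg c)).star_eq
  calc (0 : A) ≤ star (α (CFC.sqrt c)) * α (CFC.sqrt c) := star_mul_self_nonneg _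
    _ = α c := by rw [← hstar, hs, ← hmul, h]

lemma myaux_alpha_refl (α : A → A)
    (hadd : ∀ a b, α (a + b) = α a + α b)
    (hmul : ∀ a b, α (a * b) = α a * α b)
    (hstar : ∀ a, α (star a) = star (α a))
    (hinj : Function.Injective α) {c : A} (hc : 0 ≤ α c) : 0 ≤ c := by
  have hα0 : α 0 = 0 := by
    have h := hadd 0 0
    rw [add_zero] at h
    exact (left_eq_add.mp h)
  have hneg : ∀ x, α (-x) = - α x := by
    intro x
    have h := hadd x (-x)
    rw [add_neg_cancel, hα0] at h
    exact (neg_eq_of_add_eq_zero_right h.symm).symm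
  -- c is self-adjoint
  have hcsa : IsSelfAdjoint c := by
    have h1 : α (star c) = α c := by rw [hstar, (IsSelfAdjoint.of_nonneg hc).star_eq]
    exact hinj h1
  set n := c⁻ with hn
  have hnn : 0 ≤ n := CFC.negPart_nonneg c
  have hnsa : star n = n := (IsSelfAdjoint.of_nonneg hnn).star_eq
  have key : n * c * n = -(n * n * n) := by
    conv_lhs => rw [← CFC.posPart_sub_negPart c hcsa]
    rw [mul_sub, sub_mul, CFC.negPart_mul_posPart, zero_mul, zero_sub, hn]
  have h1 : (0 : A) ≤ α n * α c * α n := by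
    have h := star_left_conjugate_nonneg hc (α n)
    rwa [← hstar, hnsa] at h
  have h2 : α n * α c * α n = - α (n * n * n) := by
    rw [← hmul, ← hmul, key, hneg]
  have h3 : (0 : A) ≤ α (n * n * n) := by
    set r := CFC.sqrt n with hr
    have hrr : r * r = n := CFC.sqrt_mul_sqrt_self n hnn
    have hrsa : star r = r := (IsSelfAdjoint.of_nonneg (CFC.sqrt_nonneg n)).star_eq
    have hcube : n * n * n = star (r * (r * r)) * (r * (r * r)) := by
      rw [star_mul, star_mul, hrsa, ← hrr]
      noncomm_ring
    calc (0:A) ≤ star (α (r * (r * r))) * α (r * (r * r)) := star_mul_self_nonneg _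
      _ = α (n * n * n) := by rw [← hstar, ← hmul, ← hcube]
  have h4 : α (n * n * n) = 0 := le_antisymm (by rw [h2] at h1; exact neg_nonneg.mp h1) h3
  have h5 : n * n * n = 0 := hinj (by rw [h4, hα0])
  have h6 : n = 0 := by
    have h7 : n * n * (n * n) = 0 := by
      rw [show n * n * (n * n) = n * n * n * n by noncomm_ring, h5, zero_mul]
    have h8 : ‖n * n * (n * n)‖ = ‖n‖ * ‖n‖ * (‖n‖ * ‖n‖) := by
      calc ‖n * n * (n * n)‖ = ‖star (n * n) * (n * n)‖ := by rw [star_mul, hnsa]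
        _ = ‖n * n‖ * ‖n * n‖ := CStarRing.norm_star_mul_self
        _ = (‖n‖ * ‖n‖) * (‖n‖ * ‖n‖) := by
            rw [show n * n = star n * n by rw [hnsa], CStarRing.norm_star_mul_self]
    rw [h7, norm_zero] at h8
    have h9 : ‖n‖ = 0 := by
      have := mul_self_eq_zero.mp h8.symm
      exact mul_self_eq_zero.mp this
    exact norm_eq_zero.mp h9
  have := CFC.posPart_sub_negPart c hcsa
  rw [← hn] at *
  rw [← this, h6, sub_zero]
  exact CFC.posPart_nonneg c

lemma myaux_S_le_one (p S : A) (hp_idem : p * p = p)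
    (hp_full : Dense
      ((Submodule.span ℂ {x : A | ∃ a b, x = a * p * b} : Submodule ℂ A) : Set A))
    (hS : 0 ≤ S)
    (hkey : ∀ c : A, c * p = c → star c * (S * c) ≤ star c * c) : S ≤ 1 := by
  have hSsa : IsSelfAdjoint S := .of_nonneg hS
  set R := CFC.sqrt S with hRdef
  have hRS : R * R = S := CFC.sqrt_mul_sqrt_self S hS
  have hRsa : star R = R := (IsSelfAdjoint.of_nonneg (CFC.sqrt_nonneg S)).star_eq
  -- Step A: star c * (S^j * c) ≤ star c * c for c ∈ Ap
  have stepA : ∀ (j : ℕ) (c : A), c * p = c → star c * (R ^ (2*j) * c) ≤ star c * c := by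
    intro j
    induction j with
    | zero => intro c hc; simp
    | succ j ih =>
      intro c hc
      have e1 : R ^ (2*(j+1)) = R * R ^ (2*j) * R := by
        rw [show 2*(j+1) = 1 + 2*j + 1 by ring, pow_add, pow_add, pow_one]
      have h1 := ih (R * c) (by rw [mul_assoc, hc])
      calc star c * (R ^ (2*(j+1)) * c)
          = star (R * c) * (R ^ (2*j) * (R * c)) := by
            rw [e1, star_mul, hRsa]; simp only [mul_assoc]
        _ ≤ star (R * c) * (R * c) := h1
        _ = star c * (S * c) := by
            rw [star_mul, hRsa, ← hRS]; simp only [mul_assoc]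
        _ ≤ star c * c := hkey c hc
  have hpow : ∀ (j : ℕ) (c : A), c * p = c → star c * (S ^ j * c) ≤ star c * c := by
    intro j c hc
    have h := stepA j c hc
    rwa [pow_mul, show R ^ 2 = S by rw [sq, hRS]] at h
  -- Step B: approximate 1 by an element of span {a p b}
  have h1 : (1:A) ∈ closure ((Submodule.span ℂ {x : A | ∃ a b, x = a * p * b} : Submodule ℂ A) : Set A) :=
    hp_full 1
  rw [Metric.mem_closure_iff] at h1
  obtain ⟨w, hw_mem, hw_dist⟩ := h1 (1/2) (by norm_num)
  rw [SetLike.mem_coe, Submodule.mem_span_set'] at hw_mem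
  obtain ⟨n, f, g, hg⟩ := hw_mem
  have hrep : ∀ i : Fin n, ∃ u v : A, (g i : A) = u * p * v := fun i => (g i).2
  choose uu vv huv using hrep
  set U : Fin n → A := fun i => f i • uu i with hU
  have hw : w = ∑ i, U i * p * vv i := by
    rw [← hg]
    refine Finset.sum_congr rfl fun i _ => ?_
    rw [huv i, hU]
    simp [smul_mul_assoc]
  set C := ∑ i, ‖U i * p‖ * ‖p * vv i‖ with hC
  have hC0 : 0 ≤ C := Finset.sum_nonneg fun i _ => by positivity
  set t := ‖S‖ with ht
  have ht0 : (0:ℝ) ≤ t := norm_nonneg S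
  -- norm of dyadic powers
  have hnormpow : ∀ m : ℕ, ‖S ^ (2^m)‖ = t ^ (2^m) := by
    intro m
    induction m with
    | zero => simp; rfl
    | succ m ih =>
      have e2 : S ^ (2^(m+1)) = star (S ^ (2^m)) * S ^ (2^m) := by
        rw [(hSsa.pow (2^m)).star_eq, ← pow_add]
        congr 1
        rw [pow_succ]; ring
      rw [e2, CStarRing.norm_star_mul_self, ih, ← pow_add]
      congr 1
      rw [pow_succ]; ring
  -- contraction bound
  have hcontr : ∀ (m : ℕ) (c : A), c * p = c → ‖S ^ (2^m) * c‖ ≤ ‖c‖ := by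
    intro m c hc
    have hz : star (S ^ (2^m) * c) * (S ^ (2^m) * c) = star c * (S ^ (2^m + 2^m) * c) := by
      rw [star_mul, (hSsa.pow (2^m)).star_eq, pow_add]
      simp only [mul_assoc]
    have hle := hpow (2^m + 2^m) c hc
    have hnn : (0:A) ≤ star (S ^ (2^m) * c) * (S ^ (2^m) * c) := star_mul_self_nonneg _
    have hnorm : ‖star (S ^ (2^m) * c) * (S ^ (2^m) * c)‖ ≤ ‖star c * c‖ := by
      refine CStarAlgebra.norm_le_norm_of_nonneg_of_le hnn ?_
      rw [hz]; exact hle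
    rw [CStarRing.norm_star_mul_self, CStarRing.norm_star_mul_self] at hnorm
    nlinarith [norm_nonneg (S ^ (2^m) * c), norm_nonneg c]
  -- main recursive bound
  have hbound : ∀ m : ℕ, t ^ (2^m) * t ^ (2^m) ≤ (1/2) * (t ^ (2^m) * t ^ (2^m)) + C * t ^ (2^m) := by
    intro m
    set N := S ^ (2^m) with hN
    have hNsa : star N = N := (hSsa.pow (2^m)).star_eq
    have hNnorm : ‖N‖ = t ^ (2^m) := hnormpow m
    have hpp : ∀ x : A, p * (p * x) = p * x := fun x => by rw [← mul_assoc, hp_idem]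
    have hdec : N * N = N * ((1:A) - w) * N + ∑ i, (N * (U i * p)) * ((p * vv i) * N) := by
      have hw2 : N * w * N = ∑ i, (N * (U i * p)) * ((p * vv i) * N) := by
        rw [hw, Finset.mul_sum, Finset.sum_mul]
        refine Finset.sum_congr rfl fun i _ => ?_
        simp only [mul_assoc, hpp]
      rw [← hw2]; noncomm_ring
    have hNN : ‖N * N‖ = t ^ (2^m) * t ^ (2^m) := by
      rw [show N * N = star N * N by rw [hNsa], CStarRing.norm_star_mul_self, hNnorm]
    have hwn : ‖(1:A) - w‖ ≤ 1/2 := by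
      rw [dist_eq_norm] at hw_dist
      linarith
    calc t ^ (2^m) * t ^ (2^m) = ‖N * N‖ := hNN.symm
      _ ≤ ‖N * ((1:A) - w) * N‖ + ‖∑ i, (N * (U i * p)) * ((p * vv i) * N)‖ := by
          rw [hdec]; exact norm_add_le _ _
      _ ≤ ‖N‖ * (1/2) * ‖N‖ + ∑ i, ‖U i * p‖ * (‖p * vv i‖ * ‖N‖) := by
          refine add_le_add ?_ ?_
          · calc ‖N * ((1:A) - w) * N‖ ≤ ‖N * ((1:A) - w)‖ * ‖N‖ := norm_mul_le _ _
              _ ≤ (‖N‖ * ‖(1:A) - w‖) * ‖N‖ := by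
                  gcongr
                  exact norm_mul_le _ _
              _ ≤ ‖N‖ * (1/2) * ‖N‖ := by gcongr
          · refine (norm_sum_le _ _).trans (Finset.sum_le_sum fun i _ => ?_)
            refine (norm_mul_le _ _).trans ?_
            refine mul_le_mul (hcontr m (U i * p) (by rw [mul_assoc, hp_idem]))
              (norm_mul_le _ _) (norm_nonneg _) (norm_nonneg _)
      _ = (1/2) * (t ^ (2^m) * t ^ (2^m)) + C * t ^ (2^m) := by
          rw [hNnorm, hC, Finset.sum_mul]
          ring_nf
  have hTm : ∀ m : ℕ, t ^ (2^m) ≤ 2 * C := by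
    intro m
    have h := hbound m
    have hy : (0:ℝ) ≤ t ^ (2^m) := pow_nonneg ht0 _
    nlinarith
  have ht1 : t ≤ 1 := by
    by_contra hlt
    push_neg at hlt
    obtain ⟨k, hk⟩ := pow_unbounded_of_one_lt (2 * C) hlt
    have h2 : t ^ k ≤ t ^ (2^k) := pow_le_pow_right₀ hlt.le (Nat.lt_two_pow_self (n := k)).le
    linarith [hTm k]
  exact (CStarAlgebra.norm_le_one_iff_of_nonneg S hS).mp ht1

end MyAux


section S14

variable {A : Type*} [NormedRing A] [StarRing A] [CStarRing A]
    [NormedAlgebra ℂ A] [StarModule ℂ A]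
    [PartialOrder A] [StarOrderedRing A] [CompleteSpace A]
    {X : Type*} [NormedAddCommGroup X] [NormedSpace ℂ X] [CompleteSpace X]

/-- For a unital C*-algebra `A`, a full projection `p`, and an injective
*-endomorphism `α` with `α(A) = pAp`, let `X = Ap` be the Hilbert `A`-bimodule with
`a·ξ·b = aξα(b)` and `⟨ξ,ζ⟩ = α^{-1}(ξ*ζ)` (here realized by an isomorphism `ι : X → Ap`).
Then for any tracial state `τ` on `A` the induced trace satisfies `Tr_τ(α(a)) = τ(a)`,
and consequently `e^{-β}Tr_τ(a) ≤ τ(a)` on `A₊` iff `e^{-β}τ ≤ τ∘α`. -/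
theorem endomorphism_module_trace
    (p : A) (hp_star : star p = p) (hp_idem : p * p = p)
    (hp_full : Dense
      ((Submodule.span ℂ {x : A | ∃ a b, x = a * p * b} : Submodule ℂ A) : Set A))
    (α : A → A)
    (hα_add : ∀ a b, α (a + b) = α a + α b)
    (hα_smul : ∀ (c : ℂ) a, α (c • a) = c • α a)
    (hα_mul : ∀ a b, α (a * b) = α a * α b)
    (hα_star : ∀ a, α (star a) = star (α a))
    (hα_one : α 1 = p)
    (hα_inj : Function.Injective α)
    (hα_range : Set.range α = {x : A | ∃ b, x = p * b * p})
    (M : CStarBimoduleStr A X) (ι : X → A)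
    (hι_add : ∀ x y, ι (x + y) = ι x + ι y)
    (hι_smul : ∀ (c : ℂ) x, ι (c • x) = c • ι x)
    (hι_isom : ∀ x, ‖ι x‖ = ‖x‖)
    (hι_range : Set.range ι = {x : A | x * p = x})
    (hι_inner : ∀ x y, α (M.inner x y) = star (ι x) * ι y)
    (hι_smulR : ∀ x b, ι (M.smulR x b) = ι x * α b)
    (hι_smulL : ∀ a x, ι (M.smulL a x) = a * ι x)
    (τ : A → ℂ) (hτ : IsFiniteTrace τ) (hτ1 : τ 1 = 1)
    (β : ℝ) :
    (∀ a : A, 0 ≤ a → ∀ L : X → X, (∀ x, ι (L x) = α a * ι x) →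
      trInduced M.toCStarModuleStr τ L = ENNReal.ofReal (τ a).re) ∧
    ((∀ a : A, 0 ≤ a → ∀ L : X → X, (∀ x, ι (L x) = a * ι x) →
        ENNReal.ofReal (Real.exp (-β)) * trInduced M.toCStarModuleStr τ L
          ≤ ENNReal.ofReal (τ a).re) ↔
      (∀ a : A, 0 ≤ a → (Real.exp (-β) : ℂ) * τ a ≤ τ (α a))) := by
  letI : CStarAlgebra A := { }
  -- basic facts about τ
  have hτ0 : τ 0 = 0 := by
    have h := hτ.map_add 0 0
    rw [add_zero] at h
    exact (left_eq_add.mp h)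
  have hτsum : ∀ (I : Finset X) (F : X → A), τ (∑ ξ ∈ I, F ξ) = ∑ ξ ∈ I, τ (F ξ) :=
    fun I F => map_sum (AddMonoidHom.mk' τ hτ.map_add) F I
  have hτmono : ∀ u v : A, u ≤ v → τ u ≤ τ v := by
    intro u v h
    have h0 := hτ.nonneg _ (sub_nonneg.mpr h)
    calc τ u ≤ τ u + τ (v - u) := le_add_of_nonneg_right h0
      _ = τ (u + (v - u)) := (hτ.map_add _ _).symm
      _ = τ v := by rw [add_sub_cancel]
  -- basic facts about α
  have hα_nonneg : ∀ c : A, 0 ≤ c → 0 ≤ α c := fun c hc =>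
    myaux_alpha_nonneg α hα_mul hα_star hc
  have hα_refl : ∀ c : A, 0 ≤ α c → 0 ≤ c := fun c hc =>
    myaux_alpha_refl α hα_add hα_mul hα_star hα_inj hc
  have hαsub : ∀ u v : A, α (u - v) = α u - α v := by
    intro u v
    have h := hα_add (u - v) v
    rw [sub_add_cancel] at h
    exact eq_sub_of_add_eq h.symm
  have hα_mono : ∀ u v : A, u ≤ v → α u ≤ α v := by
    intro u v h
    rw [← sub_nonneg, ← hαsub]
    exact hα_nonneg _ (sub_nonneg.mpr h)
  have hα_refl_le : ∀ u v : A, α u ≤ α v → u ≤ v := by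
    intro u v h
    rw [← sub_nonneg]
    exact hα_refl _ (by rw [hαsub]; exact sub_nonneg.mpr h)
  have hαsum : ∀ (I : Finset X) (F : X → A), α (∑ ξ ∈ I, F ξ) = ∑ ξ ∈ I, α (F ξ) :=
    fun I F => map_sum (AddMonoidHom.mk' α hα_add) F I
  -- p facts
  have hpαl : ∀ b : A, p * α b = α b := fun b => by rw [← hα_one, ← hα_mul, one_mul]
  have hpαr : ∀ b : A, α b * p = α b := fun b => by rw [← hα_one, ← hα_mul, mul_one]
  have hxp : ∀ x : X, ι x * p = ι x := by
    intro x
    have hx : ι x ∈ Set.range ι := ⟨x, rfl⟩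
    rw [hι_range] at hx
    exact hx
  have hmemι : ∀ y : A, y * p = y → ∃ x : X, ι x = y := by
    intro y hy
    have hmem : y ∈ Set.range ι := by rw [hι_range]; exact hy
    exact hmem
  have hαdsa : ∀ c : A, star c = c → star (α c) = α c := fun c hc => by
    rw [← hα_star, hc]
  -- the transported subunit condition
  have hSsub : ∀ (I : Finset X), Subunit M.toCStarModuleStr I → ∀ c : A, c * p = c →
      star c * ((∑ ξ ∈ I, ι ξ * star (ι ξ)) * c) ≤ star c * c := by
    intro I hsub c hc
    obtain ⟨η, rfl⟩ := hmemι c hc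
    have hterm : ∀ ξ : X, α (M.inner η ξ * M.inner ξ η)
        = star (ι η) * (ι ξ * (star (ι ξ) * ι η)) := by
      intro ξ
      rw [hα_mul, hι_inner, hι_inner]
      simp only [mul_assoc]
    have h2 : ∑ ξ ∈ I, star (ι η) * (ι ξ * (star (ι ξ) * ι η)) ≤ star (ι η) * ι η := by
      calc ∑ ξ ∈ I, star (ι η) * (ι ξ * (star (ι ξ) * ι η))
          = ∑ ξ ∈ I, α (M.inner η ξ * M.inner ξ η) :=
            Finset.sum_congr rfl fun ξ _ => (hterm ξ).symm
        _ = α (∑ ξ ∈ I, M.inner η ξ * M.inner ξ η) := (hαsum _ _).symm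
        _ ≤ α (M.inner η η) := hα_mono _ _ (hsub η)
        _ = star (ι η) * ι η := hι_inner η η
    calc star (ι η) * ((∑ ξ ∈ I, ι ξ * star (ι ξ)) * ι η)
        = ∑ ξ ∈ I, star (ι η) * (ι ξ * (star (ι ξ) * ι η)) := by
          rw [Finset.sum_mul, Finset.mul_sum]
          exact Finset.sum_congr rfl fun ξ _ => by simp only [mul_assoc]
      _ ≤ star (ι η) * ι η := h2
  -- the key operator bound
  have hS1 : ∀ I : Finset X, Subunit M.toCStarModuleStr I →
      (∑ ξ ∈ I, ι ξ * star (ι ξ)) ≤ 1 := by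
    intro I hsub
    refine myaux_S_le_one p _ hp_idem hp_full ?_ (hSsub I hsub)
    exact Finset.sum_nonneg fun ξ _ => mul_star_self_nonneg _
  -- PART 1
  have part1 : ∀ a : A, 0 ≤ a → ∀ L : X → X, (∀ x, ι (L x) = α a * ι x) →
      trInduced M.toCStarModuleStr τ L = ENNReal.ofReal (τ a).re := by
    intro a ha L hL
    have hdd : CFC.sqrt a * CFC.sqrt a = a := CFC.sqrt_mul_sqrt_self a ha
    set d := CFC.sqrt a with hddef
    have hdsa : star d = d := (IsSelfAdjoint.of_nonneg (CFC.sqrt_nonneg a)).star_eq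
    have hαd : star (α d) = α d := hαdsa d hdsa
    have hcα : ∀ ξ : X, α (M.inner ξ (L ξ)) = star (ι ξ) * (α a * ι ξ) := by
      intro ξ; rw [hι_inner, hL]
    unfold trInduced
    refine le_antisymm ?_ ?_
    · refine iSup₂_le fun I hsub => ?_
      have hex : ∀ ξ : X, ∃ e : A, α e = α d * ι ξ := by
        intro ξ
        have hy : α d * ι ξ ∈ Set.range α := by
          rw [hα_range]
          refine ⟨α d * ι ξ, ?_⟩
          symm
          rw [← mul_assoc p (α d) (ι ξ), hpαl, mul_assoc, hxp]
        exact hy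
      choose e he using hex
      have hαdd : α d * α d = α a := by rw [← hα_mul, hdd]
      have hinner_eq : ∀ ξ : X, M.inner ξ (L ξ) = star (e ξ) * e ξ := by
        intro ξ
        apply hα_inj
        rw [hcα, hα_mul, hα_star, he, star_mul, hαd]
        calc star (ι ξ) * (α a * ι ξ) = star (ι ξ) * ((α d * α d) * ι ξ) := by rw [hαdd]
          _ = star (ι ξ) * α d * (α d * ι ξ) := by simp only [mul_assoc]
      have hτval : ∀ ξ : X, τ (M.inner ξ (L ξ)) = τ (e ξ * star (e ξ)) := by
        intro ξ; rw [hinner_eq]; exact hτ.tracial _ _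
      have hEle : (∑ ξ ∈ I, e ξ * star (e ξ)) ≤ a := by
        refine hα_refl_le _ _ ?_
        rw [hαsum]
        have hterm : ∀ ξ : X, α (e ξ * star (e ξ)) = α d * (ι ξ * (star (ι ξ) * α d)) := by
          intro ξ
          rw [hα_mul, hα_star, he, star_mul, hαd]
          simp only [mul_assoc]
        rw [Finset.sum_congr rfl fun ξ _ => hterm ξ]
        have hkey := hSsub I hsub (α d) (hpαr d)
        rw [hαd] at hkey
        calc ∑ ξ ∈ I, α d * (ι ξ * (star (ι ξ) * α d))
            = α d * ((∑ ξ ∈ I, ι ξ * star (ι ξ)) * α d) := by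
              rw [Finset.sum_mul, Finset.mul_sum]
              exact Finset.sum_congr rfl fun ξ _ => by simp only [mul_assoc]
          _ ≤ α d * α d := hkey
          _ = α a := hαdd
      have hnn : ∀ ξ ∈ I, 0 ≤ (τ (M.inner ξ (L ξ))).re := by
        intro ξ _
        rw [hτval]
        exact (Complex.nonneg_iff.mp (hτ.nonneg _ (mul_star_self_nonneg _))).1
      have hsum_le : ∑ ξ ∈ I, (τ (M.inner ξ (L ξ))).re ≤ (τ a).re := by
        have h1 : τ (∑ ξ ∈ I, e ξ * star (e ξ)) ≤ τ a := hτmono _ _ hEle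
        rw [hτsum] at h1
        have h2 := (Complex.le_def.mp h1).1
        calc ∑ ξ ∈ I, (τ (M.inner ξ (L ξ))).re
            = ∑ ξ ∈ I, (τ (e ξ * star (e ξ))).re :=
              Finset.sum_congr rfl fun ξ _ => by rw [hτval]
          _ = (∑ ξ ∈ I, τ (e ξ * star (e ξ))).re := (Complex.re_sum _ _).symm
          _ ≤ (τ a).re := h2
      calc ∑ ξ ∈ I, ENNReal.ofReal (τ (M.inner ξ (L ξ))).re
          = ENNReal.ofReal (∑ ξ ∈ I, (τ (M.inner ξ (L ξ))).re) :=
            (ENNReal.ofReal_sum_of_nonneg hnn).symm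
        _ ≤ ENNReal.ofReal (τ a).re := ENNReal.ofReal_le_ofReal hsum_le
    · obtain ⟨ξ₀, hξ₀⟩ := hmemι p hp_idem
      have hsub0 : Subunit M.toCStarModuleStr {ξ₀} := by
        intro η
        rw [Finset.sum_singleton]
        refine hα_refl_le _ _ ?_
        rw [hα_mul, hι_inner, hι_inner, hι_inner, hξ₀, hp_star]
        have h1 : star (ι η) * p * (p * ι η) = star (ι η) * (p * ι η) := by
          rw [mul_assoc, ← mul_assoc p p, hp_idem]
        rw [h1]
        have h4 : ((1:A) - p) * ((1:A) - p) = (1:A) - p := by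
          rw [sub_mul, one_mul, mul_sub, mul_one, hp_idem, sub_self, sub_zero]
        have hq : star ((1:A) - p) = (1:A) - p := by rw [star_sub, star_one, hp_star]
        have h3 : (0:A) ≤ (1:A) - p := by
          have h5 := star_mul_self_nonneg ((1:A) - p)
          rwa [hq, h4] at h5
        have h2 : (0:A) ≤ star (ι η) * (((1:A) - p) * ι η) := by
          have h6 := star_left_conjugate_nonneg h3 (ι η)
          simpa only [mul_assoc] using h6
        rw [← sub_nonneg]
        have h7 : star (ι η) * ι η - star (ι η) * (p * ι η)
            = star (ι η) * (((1:A) - p) * ι η) := by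
          rw [sub_mul, one_mul, mul_sub]
        rw [h7]
        exact h2
      have hinner0 : M.inner ξ₀ (L ξ₀) = a := by
        apply hα_inj
        rw [hcα, hξ₀, hp_star, hpαr, hpαl]
      refine le_iSup₂_of_le {ξ₀} hsub0 ?_
      rw [Finset.sum_singleton, hinner0]
  refine ⟨part1, ?_, ?_⟩
  · -- forward direction
    intro hyp b hb
    have hLex : ∀ x : X, ∃ w : X, ι w = α b * ι x := by
      intro x
      exact hmemι _ (by rw [mul_assoc, hxp])
    choose L hL using hLex
    have h1 := hyp (α b) (hα_nonneg b hb) L hL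
    rw [part1 b hb L hL] at h1
    have hbnn := Complex.nonneg_iff.mp (hτ.nonneg b hb)
    have habnn := Complex.nonneg_iff.mp (hτ.nonneg _ (hα_nonneg b hb))
    rw [← ENNReal.ofReal_mul (Real.exp_nonneg _)] at h1
    have h2 : Real.exp (-β) * (τ b).re ≤ (τ (α b)).re :=
      (ENNReal.ofReal_le_ofReal_iff habnn.1).mp h1
    rw [Complex.le_def]
    constructor
    · rw [Complex.mul_re, Complex.ofReal_re, Complex.ofReal_im, zero_mul, sub_zero]
      exact h2
    · rw [Complex.mul_im, Complex.ofReal_re, Complex.ofReal_im, zero_mul, add_zero,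
        ← hbnn.2, mul_zero]
      exact habnn.2
  · -- backward direction
    intro hyp a ha L hL
    have hcα : ∀ ξ : X, α (M.inner ξ (L ξ)) = star (ι ξ) * (a * ι ξ) := by
      intro ξ; rw [hι_inner, hL]
    have hdd : CFC.sqrt a * CFC.sqrt a = a := CFC.sqrt_mul_sqrt_self a ha
    set d := CFC.sqrt a with hddef
    have hdsa : star d = d := (IsSelfAdjoint.of_nonneg (CFC.sqrt_nonneg a)).star_eq
    unfold trInduced
    rw [ENNReal.mul_iSup]
    refine iSup_le fun I => ?_
    rw [ENNReal.mul_iSup]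
    refine iSup_le fun hsub => ?_
    have hnn_inner : ∀ ξ : X, 0 ≤ M.inner ξ (L ξ) := by
      intro ξ
      refine hα_refl _ ?_
      rw [hcα]
      simpa only [mul_assoc] using star_left_conjugate_nonneg ha (ι ξ)
    have hnn : ∀ ξ ∈ I, 0 ≤ (τ (M.inner ξ (L ξ))).re := fun ξ _ =>
      (Complex.nonneg_iff.mp (hτ.nonneg _ (hnn_inner ξ))).1
    have hterm : ∀ ξ : X, Real.exp (-β) * (τ (M.inner ξ (L ξ))).re
        ≤ (τ (star (ι ξ) * (a * ι ξ))).re := by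
      intro ξ
      have h := hyp _ (hnn_inner ξ)
      rw [hcα] at h
      have h2 := (Complex.le_def.mp h).1
      rwa [Complex.mul_re, Complex.ofReal_re, Complex.ofReal_im, zero_mul, sub_zero] at h2
    have hsum2 : ∑ ξ ∈ I, (τ (star (ι ξ) * (a * ι ξ))).re ≤ (τ a).re := by
      have htr : ∀ ξ : X, τ (star (ι ξ) * (a * ι ξ)) = τ (d * (ι ξ * (star (ι ξ) * d))) := by
        intro ξ
        have e1 : star (ι ξ) * (a * ι ξ) = (star (ι ξ) * d) * (d * ι ξ) := by
          rw [← hdd]; simp only [mul_assoc]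
        rw [e1, hτ.tracial]
        congr 1
        simp only [mul_assoc]
      have hSle := hS1 I hsub
      have hdSd : d * ((∑ ξ ∈ I, ι ξ * star (ι ξ)) * d) ≤ a := by
        have h0 : (0:A) ≤ star d * (((1:A) - (∑ ξ ∈ I, ι ξ * star (ι ξ))) * d) := by
          have h6 := star_left_conjugate_nonneg (sub_nonneg.mpr hSle) d
          simpa only [mul_assoc] using h6
        rw [hdsa] at h0
        rw [← sub_nonneg]
        have e2 : a - d * ((∑ ξ ∈ I, ι ξ * star (ι ξ)) * d)
            = d * (((1:A) - (∑ ξ ∈ I, ι ξ * star (ι ξ))) * d) := by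
          rw [← hdd]; noncomm_ring
        rw [e2]
        exact h0
      have h3 : τ (∑ ξ ∈ I, d * (ι ξ * (star (ι ξ) * d))) ≤ τ a := by
        refine hτmono _ _ ?_
        calc ∑ ξ ∈ I, d * (ι ξ * (star (ι ξ) * d))
            = d * ((∑ ξ ∈ I, ι ξ * star (ι ξ)) * d) := by
              rw [Finset.sum_mul, Finset.mul_sum]
              exact Finset.sum_congr rfl fun ξ _ => by simp only [mul_assoc]
          _ ≤ a := hdSd
      rw [hτsum] at h3
      have h4 := (Complex.le_def.mp h3).1
      calc ∑ ξ ∈ I, (τ (star (ι ξ) * (a * ι ξ))).re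
          = ∑ ξ ∈ I, (τ (d * (ι ξ * (star (ι ξ) * d)))).re :=
            Finset.sum_congr rfl fun ξ _ => by rw [htr]
        _ = (∑ ξ ∈ I, τ (d * (ι ξ * (star (ι ξ) * d)))).re := (Complex.re_sum _ _).symm
        _ ≤ (τ a).re := h4
    rw [← ENNReal.ofReal_sum_of_nonneg hnn, ← ENNReal.ofReal_mul (Real.exp_nonneg _)]
    refine ENNReal.ofReal_le_ofReal ?_
    calc Real.exp (-β) * ∑ ξ ∈ I, (τ (M.inner ξ (L ξ))).re
        = ∑ ξ ∈ I, Real.exp (-β) * (τ (M.inner ξ (L ξ))).re := by rw [Finset.mul_sum]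
      _ ≤ ∑ ξ ∈ I, (τ (star (ι ξ) * (a * ι ξ))).re := Finset.sum_le_sum fun ξ _ => hterm ξ
      _ ≤ (τ a).re := hsum2


end S14
end
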